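/- arXiv:2511.18500 — 6 statements merged into one kernel-verified Lean document; each statement's English description precedes it below -/
import Mathlib

section
/- For every real c ≥ 1 and all p, q ∈ ℝ³ one has the chain of inequalities 2p⁰q⁰ − 2|p||q| ≥ c²(c² + |p|² + |q|²)/(p⁰q⁰) ≥ c²·max{p⁰/q⁰, q⁰/p⁰} ≥ max{⟨p⟩/⟨q⟩, ⟨q⟩/⟨p⟩}, and consequently 1/(2(p⁰q⁰ − p·q + c²)) ≤ 1/(2(p⁰q⁰ − |p||q|)) ≤ (1/c²)·min{p⁰/q⁰, q⁰/p⁰} ≤ min{⟨p⟩/⟨q⟩, ⟨q⟩/⟨p⟩}. -/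
open Real MeasureTheory
open scoped BigOperators

noncomputable section

/-- Momentum space `ℝ³`. -/
abbrev E3 := EuclideanSpace ℝ (Fin 3)

/-- Relativistic energy `p⁰ = √(c² + |p|²)`. -/
def pZ (c : ℝ) (p : E3) : ℝ := Real.sqrt (c ^ 2 + ‖p‖ ^ 2)

/-- Japanese bracket `⟨p⟩ = √(1 + |p|²)`. -/
def jb (p : E3) : ℝ := Real.sqrt (1 + ‖p‖ ^ 2)

/-- Euclidean inner product on `ℝ³`. -/
def dotp (p q : E3) : ℝ := inner ℝ p q

lemma poly_aux (u x y : ℝ) (hu : 1 ≤ u) (hx : 0 ≤ x) (hy : 0 ≤ y) :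
    (1 + x) * (u + y) ≤ u ^ 2 * ((u + x) * (1 + y)) := by
  have h1 : 0 ≤ u - 1 := by linarith
  nlinarith [mul_nonneg hx hy, mul_nonneg h1 hx, mul_nonneg h1 hy,
    mul_nonneg (mul_nonneg h1 hx) hy, mul_nonneg h1 h1,
    mul_nonneg (mul_nonneg h1 h1) hy, mul_nonneg (mul_nonneg h1 h1) h1]

set_option maxHeartbeats 1000000 in
lemma chain_real (c a b P Q J K d : ℝ) (hc : 1 ≤ c) (ha : 0 ≤ a) (hb : 0 ≤ b)
    (hP : 0 < P) (hQ : 0 < Q) (hJ : 0 < J) (hK : 0 < K)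
    (hP2 : P ^ 2 = c ^ 2 + a ^ 2) (hQ2 : Q ^ 2 = c ^ 2 + b ^ 2)
    (hJ2 : J ^ 2 = 1 + a ^ 2) (hK2 : K ^ 2 = 1 + b ^ 2) (hd : d ≤ a * b) :
    (c ^ 2 * (c ^ 2 + a ^ 2 + b ^ 2) / (P * Q) ≤ 2 * P * Q - 2 * a * b ∧
      c ^ 2 * max (P / Q) (Q / P) ≤ c ^ 2 * (c ^ 2 + a ^ 2 + b ^ 2) / (P * Q) ∧
      max (J / K) (K / J) ≤ c ^ 2 * max (P / Q) (Q / P)) ∧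
    (1 / (2 * (P * Q - d + c ^ 2)) ≤ 1 / (2 * (P * Q - a * b)) ∧
      1 / (2 * (P * Q - a * b)) ≤ 1 / c ^ 2 * min (P / Q) (Q / P) ∧
      1 / c ^ 2 * min (P / Q) (Q / P) ≤ min (J / K) (K / J)) := by
  have hc0 : (0:ℝ) < c := lt_of_lt_of_le one_pos hc
  have hc2 : (1:ℝ) ≤ c ^ 2 := by nlinarith
  have hPQ : 0 < P * Q := mul_pos hP hQ
  have hPQsq : (P * Q) ^ 2 = (c ^ 2 + a ^ 2) * (c ^ 2 + b ^ 2) := by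
    rw [mul_pow, hP2, hQ2]
  have hab : a * b < P * Q := by
    have h1 : (a * b) ^ 2 < (P * Q) ^ 2 := by
      rw [mul_pow, hPQsq]; nlinarith [sq_nonneg a, sq_nonneg b]
    nlinarith [mul_nonneg ha hb]
  -- key auxiliary inequalities:  J*Q ≤ c^2*(P*K)  and  K*P ≤ c^2*(Q*J)
  have aux1 : J * Q ≤ c ^ 2 * (P * K) := by
    have hsq : (J * Q) ^ 2 ≤ (c ^ 2 * (P * K)) ^ 2 := by
      have := poly_aux (c ^ 2) (a ^ 2) (b ^ 2) hc2 (sq_nonneg a) (sq_nonneg b)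
      calc (J * Q) ^ 2 = (1 + a ^ 2) * (c ^ 2 + b ^ 2) := by
            rw [mul_pow, hJ2, hQ2]
        _ ≤ (c ^ 2) ^ 2 * ((c ^ 2 + a ^ 2) * (1 + b ^ 2)) := this
        _ = (c ^ 2 * (P * K)) ^ 2 := by rw [mul_pow, mul_pow, hP2, hK2]
    exact le_of_pow_le_pow_left₀ two_ne_zero (by positivity) hsq
  have aux2 : K * P ≤ c ^ 2 * (Q * J) := by
    have hsq : (K * P) ^ 2 ≤ (c ^ 2 * (Q * J)) ^ 2 := by
      have := poly_aux (c ^ 2) (b ^ 2) (a ^ 2) hc2 (sq_nonneg b) (sq_nonneg a)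
      calc (K * P) ^ 2 = (1 + b ^ 2) * (c ^ 2 + a ^ 2) := by
            rw [mul_pow, hK2, hP2]
        _ ≤ (c ^ 2) ^ 2 * ((c ^ 2 + b ^ 2) * (1 + a ^ 2)) := this
        _ = (c ^ 2 * (Q * J)) ^ 2 := by rw [mul_pow, mul_pow, hQ2, hJ2]
    exact le_of_pow_le_pow_left₀ two_ne_zero (by positivity) hsq
  -- (1)
  have ineq1 : c ^ 2 * (c ^ 2 + a ^ 2 + b ^ 2) / (P * Q) ≤ 2 * P * Q - 2 * a * b := by
    rw [div_le_iff₀ hPQ]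
    have key : 2 * (a * b) * (P * Q)
        ≤ c ^ 4 + c ^ 2 * (a ^ 2 + b ^ 2) + 2 * a ^ 2 * b ^ 2 := by
      have hL : (2 * (a * b) * (P * Q)) ^ 2
          ≤ (c ^ 4 + c ^ 2 * (a ^ 2 + b ^ 2) + 2 * a ^ 2 * b ^ 2) ^ 2 := by
        have e : (2 * (a * b) * (P * Q)) ^ 2
            = 4 * a ^ 2 * b ^ 2 * ((c ^ 2 + a ^ 2) * (c ^ 2 + b ^ 2)) := by
          calc (2 * (a * b) * (P * Q)) ^ 2 = 4 * a ^ 2 * b ^ 2 * (P * Q) ^ 2 := by ring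
            _ = 4 * a ^ 2 * b ^ 2 * ((c ^ 2 + a ^ 2) * (c ^ 2 + b ^ 2)) := by rw [hPQsq]
        rw [e]
        nlinarith [sq_nonneg (c ^ 4 + c ^ 2 * a ^ 2 + c ^ 2 * b ^ 2)]
      exact le_of_pow_le_pow_left₀ two_ne_zero (by positivity) hL
    nlinarith [key, hPQsq]
  -- (2)
  have ineq2a : c ^ 2 * (P / Q) ≤ c ^ 2 * (c ^ 2 + a ^ 2 + b ^ 2) / (P * Q) := by
    rw [mul_div_assoc]
    refine mul_le_mul_of_nonneg_left ?_ (by positivity)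
    rw [div_le_div_iff₀ hQ hPQ]
    have e : P * (P * Q) = (c ^ 2 + a ^ 2) * Q := by rw [← hP2]; ring
    rw [e]
    have : c ^ 2 + a ^ 2 ≤ c ^ 2 + a ^ 2 + b ^ 2 := by nlinarith [sq_nonneg b]
    exact mul_le_mul_of_nonneg_right this hQ.le
  have ineq2b : c ^ 2 * (Q / P) ≤ c ^ 2 * (c ^ 2 + a ^ 2 + b ^ 2) / (P * Q) := by
    rw [mul_div_assoc]
    refine mul_le_mul_of_nonneg_left ?_ (by positivity)
    rw [div_le_div_iff₀ hP hPQ]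
    have e : Q * (P * Q) = (c ^ 2 + b ^ 2) * P := by rw [← hQ2]; ring
    rw [e]
    have : c ^ 2 + b ^ 2 ≤ c ^ 2 + a ^ 2 + b ^ 2 := by nlinarith [sq_nonneg a]
    exact mul_le_mul_of_nonneg_right this hP.le
  have ineq2 : c ^ 2 * max (P / Q) (Q / P) ≤ c ^ 2 * (c ^ 2 + a ^ 2 + b ^ 2) / (P * Q) := by
    rcases max_cases (P / Q) (Q / P) with ⟨h, _⟩ | ⟨h, _⟩ <;> rw [h] <;> assumption
  -- (3)
  have ineq3a : J / K ≤ c ^ 2 * (P / Q) := by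
    rw [show c ^ 2 * (P / Q) = c ^ 2 * P / Q by rw [mul_div_assoc], div_le_div_iff₀ hK hQ]
    calc J * Q ≤ c ^ 2 * (P * K) := aux1
      _ = c ^ 2 * P * K := by ring
  have ineq3b : K / J ≤ c ^ 2 * (Q / P) := by
    rw [show c ^ 2 * (Q / P) = c ^ 2 * Q / P by rw [mul_div_assoc], div_le_div_iff₀ hJ hP]
    calc K * P ≤ c ^ 2 * (Q * J) := aux2
      _ = c ^ 2 * Q * J := by ring
  have ineq3 : max (J / K) (K / J) ≤ c ^ 2 * max (P / Q) (Q / P) := by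
    refine max_le ?_ ?_
    · exact ineq3a.trans (mul_le_mul_of_nonneg_left (le_max_left _ _) (by positivity))
    · exact ineq3b.trans (mul_le_mul_of_nonneg_left (le_max_right _ _) (by positivity))
  -- (4)
  have hdenom : 0 < 2 * (P * Q - a * b) := by linarith
  have ineq4 : 1 / (2 * (P * Q - d + c ^ 2)) ≤ 1 / (2 * (P * Q - a * b)) := by
    apply one_div_le_one_div_of_le hdenom
    nlinarith [sq_nonneg c]
  -- (5)
  have h5a : c ^ 2 * (P / Q) ≤ 2 * (P * Q - a * b) := by
    calc c ^ 2 * (P / Q) ≤ c ^ 2 * (c ^ 2 + a ^ 2 + b ^ 2) / (P * Q) := ineq2a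
      _ ≤ 2 * P * Q - 2 * a * b := ineq1
      _ = 2 * (P * Q - a * b) := by ring
  have h5b : c ^ 2 * (Q / P) ≤ 2 * (P * Q - a * b) := by
    calc c ^ 2 * (Q / P) ≤ c ^ 2 * (c ^ 2 + a ^ 2 + b ^ 2) / (P * Q) := ineq2b
      _ ≤ 2 * P * Q - 2 * a * b := ineq1
      _ = 2 * (P * Q - a * b) := by ring
  have ineq5 : 1 / (2 * (P * Q - a * b)) ≤ 1 / c ^ 2 * min (P / Q) (Q / P) := by
    rw [mul_min_of_nonneg _ _ (by positivity : (0:ℝ) ≤ 1 / c ^ 2)]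
    refine le_min ?_ ?_
    · calc 1 / (2 * (P * Q - a * b)) ≤ 1 / (c ^ 2 * (Q / P)) :=
            one_div_le_one_div_of_le (by positivity) h5b
        _ = 1 / c ^ 2 * (P / Q) := by
            field_simp
    · calc 1 / (2 * (P * Q - a * b)) ≤ 1 / (c ^ 2 * (P / Q)) :=
            one_div_le_one_div_of_le (by positivity) h5a
        _ = 1 / c ^ 2 * (Q / P) := by
            field_simp
  -- (6)
  have ineq6 : 1 / c ^ 2 * min (P / Q) (Q / P) ≤ min (J / K) (K / J) := by
    refine le_min ?_ ?_
    · calc 1 / c ^ 2 * min (P / Q) (Q / P) ≤ 1 / c ^ 2 * (P / Q) :=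
            mul_le_mul_of_nonneg_left (min_le_left _ _) (by positivity)
        _ ≤ J / K := by
            rw [show (1:ℝ) / c ^ 2 * (P / Q) = P / (c ^ 2 * Q) by
              field_simp, div_le_div_iff₀ (by positivity) hK]
            nlinarith [aux2]
    · calc 1 / c ^ 2 * min (P / Q) (Q / P) ≤ 1 / c ^ 2 * (Q / P) :=
            mul_le_mul_of_nonneg_left (min_le_right _ _) (by positivity)
        _ ≤ K / J := by
            rw [show (1:ℝ) / c ^ 2 * (Q / P) = Q / (c ^ 2 * P) by
              field_simp, div_le_div_iff₀ (by positivity) hJ]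
            nlinarith [aux1]
  exact ⟨⟨ineq1, ineq2, ineq3⟩, ineq4, ineq5, ineq6⟩

/-- For every `c ≥ 1` and all `p, q ∈ ℝ³` one has the chain of inequalities
`2p⁰q⁰ − 2|p||q| ≥ c²(c² + |p|² + |q|²)/(p⁰q⁰) ≥ c²·max{p⁰/q⁰, q⁰/p⁰} ≥ max{⟨p⟩/⟨q⟩, ⟨q⟩/⟨p⟩}`,
and consequently
`1/(2(p⁰q⁰ − p·q + c²)) ≤ 1/(2(p⁰q⁰ − |p||q|)) ≤ (1/c²)·min{p⁰/q⁰, q⁰/p⁰} ≤ min{⟨p⟩/⟨q⟩, ⟨q⟩/⟨p⟩}`. -/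
theorem stmt0 (c : ℝ) (hc : 1 ≤ c) (p q : E3) :
    (c ^ 2 * (c ^ 2 + ‖p‖ ^ 2 + ‖q‖ ^ 2) / (pZ c p * pZ c q)
        ≤ 2 * pZ c p * pZ c q - 2 * ‖p‖ * ‖q‖ ∧
      c ^ 2 * max (pZ c p / pZ c q) (pZ c q / pZ c p)
        ≤ c ^ 2 * (c ^ 2 + ‖p‖ ^ 2 + ‖q‖ ^ 2) / (pZ c p * pZ c q) ∧
      max (jb p / jb q) (jb q / jb p)
        ≤ c ^ 2 * max (pZ c p / pZ c q) (pZ c q / pZ c p)) ∧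
    (1 / (2 * (pZ c p * pZ c q - dotp p q + c ^ 2))
        ≤ 1 / (2 * (pZ c p * pZ c q - ‖p‖ * ‖q‖)) ∧
      1 / (2 * (pZ c p * pZ c q - ‖p‖ * ‖q‖))
        ≤ 1 / c ^ 2 * min (pZ c p / pZ c q) (pZ c q / pZ c p) ∧
      1 / c ^ 2 * min (pZ c p / pZ c q) (pZ c q / pZ c p)
        ≤ min (jb p / jb q) (jb q / jb p)) := by
  have hc0 : (0:ℝ) < c := lt_of_lt_of_le one_pos hc
  have hP : 0 < pZ c p := Real.sqrt_pos.mpr (by positivity)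
  have hQ : 0 < pZ c q := Real.sqrt_pos.mpr (by positivity)
  have hJ : 0 < jb p := Real.sqrt_pos.mpr (by positivity)
  have hK : 0 < jb q := Real.sqrt_pos.mpr (by positivity)
  have hP2 : (pZ c p) ^ 2 = c ^ 2 + ‖p‖ ^ 2 := Real.sq_sqrt (by positivity)
  have hQ2 : (pZ c q) ^ 2 = c ^ 2 + ‖q‖ ^ 2 := Real.sq_sqrt (by positivity)
  have hJ2 : (jb p) ^ 2 = 1 + ‖p‖ ^ 2 := Real.sq_sqrt (by positivity)
  have hK2 : (jb q) ^ 2 = 1 + ‖q‖ ^ 2 := Real.sq_sqrt (by positivity)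
  have hd : dotp p q ≤ ‖p‖ * ‖q‖ := real_inner_le_norm p q
  exact chain_real c ‖p‖ ‖q‖ (pZ c p) (pZ c q) (jb p) (jb q) (dotp p q) hc
    (norm_nonneg p) (norm_nonneg q) hP hQ hJ hK hP2 hQ2 hJ2 hK2 hd


end
end

section
/- Let c ≥ 1 and p, q ∈ ℝ³, and set g = √(2(p⁰q⁰ − p·q − c²)) and s = g² + 4c² = 2(p⁰q⁰ − p·q + c²) (g is well defined since p⁰q⁰ − p·q ≥ c²). Then: (i) c|p−q|/√(p⁰q⁰) ≤ g ≤ |p−q|; (ii) g ≤ 5·min{⟨p⟩⟨q⟩√(q⁰/p⁰), ⟨p⟩⟨q⟩√(p⁰/q⁰)}; (iii) 4c² ≤ s ≤ 4p⁰q⁰; (iv) s ≥ c²·max{p⁰/q⁰, q⁰/p⁰}. -/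
set_option maxHeartbeats 1000000


open Real MeasureTheory
open scoped BigOperators

noncomputable section

lemma le_of_sq_le_sq' {X Y : ℝ} (hx : 0 ≤ X) (hy : 0 ≤ Y) (h : X^2 ≤ Y^2) : X ≤ Y := by
  have := Real.sqrt_le_sqrt h
  rwa [Real.sqrt_sq hx, Real.sqrt_sq hy] at this

lemma arithA (c x y a b : ℝ) (hx : 0 ≤ x) (hy : 0 ≤ y)
    (ha2 : a^2 = c^2 + x^2) (hb2 : b^2 = c^2 + y^2) (ha0 : 0 < a) (hb0 : 0 < b) :
    c^2 + x*y ≤ a*b := by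
  have hab2 : a^2*b^2 = (c^2+x^2)*(c^2+y^2) := by rw [ha2, hb2]
  nlinarith [sq_nonneg (c*x - c*y), mul_pos ha0 hb0, mul_nonneg hx hy, sq_nonneg c]

lemma arithB (c x y d a b : ℝ) (hx : 0 ≤ x) (hy : 0 ≤ y)
    (ha2 : a^2 = c^2 + x^2) (hb2 : b^2 = c^2 + y^2) (ha0 : 0 < a) (hb0 : 0 < b)
    (hd1 : d ≤ x*y) :
    c^2*(x^2 + y^2 - 2*d) ≤ 2*(a*b)*(a*b - d - c^2) := by
  have hab2 : a^2*b^2 = (c^2+x^2)*(c^2+y^2) := by rw [ha2, hb2]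
  have I1 : (a*b - c^2)^2 = x^2*y^2 + c^2*(a-b)^2 := by
    linear_combination hab2 - c^2*ha2 - c^2*hb2
  have hA : c^2 + x*y ≤ a*b := arithA c x y a b hx hy ha2 hb2 ha0 hb0
  have hw : 0 ≤ a*b - c^2 := by nlinarith [mul_nonneg hx hy]
  have expand : 2*(a*b)*(a*b - d - c^2) - c^2*(x^2 + y^2 - 2*d)
      = 2*((x*y - d)*(a*b - c^2)) + (a*b - c^2 - x*y)^2
        + (x^2*y^2 + c^2*(a-b)^2 - (a*b - c^2)^2) := by
    linear_combination 2*hab2 - c^2*ha2 - c^2*hb2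
  have n1 : 0 ≤ (x*y - d)*(a*b - c^2) := mul_nonneg (by linarith) hw
  have n2 : 0 ≤ (a*b - c^2 - x*y)^2 := sq_nonneg _
  linarith [expand, I1]

lemma arithD (c x y d a b P Q : ℝ) (hc : 1 ≤ c) (hx : 0 ≤ x) (hy : 0 ≤ y)
    (ha2 : a^2 = c^2 + x^2) (hb2 : b^2 = c^2 + y^2) (ha0 : 0 < a) (hb0 : 0 < b)
    (hP2 : P^2 = 1 + x^2) (hQ2 : Q^2 = 1 + y^2) (hP0 : 0 < P) (hQ0 : 0 < Q)
    (hd2 : -(x*y) ≤ d) :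
    (a*b)*(2*(a*b - d - c^2)) ≤ 25*(P^2*Q^2)*b^2 := by
  have hab2 : a^2*b^2 = (c^2+x^2)*(c^2+y^2) := by rw [ha2, hb2]
  have hA : c^2 + x*y ≤ a*b := arithA c x y a b hx hy ha2 hb2 ha0 hb0
  have hxy0 : 0 ≤ x*y := mul_nonneg hx hy
  have hcab : c^2 ≤ a*b := by linarith
  have hcb : c^2 ≤ b^2 := by nlinarith [sq_nonneg y]
  have hc1 : 1 ≤ c^2 := by nlinarith
  have hb1 : 1 ≤ b^2 := le_trans hc1 hcb
  have hQ1 : 1 ≤ Q := by nlinarith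
  have haP : a ≤ b*P := by
    have h1 : a^2 ≤ (b*P)^2 := by nlinarith [sq_nonneg (c*x), sq_nonneg x]
    exact le_of_sq_le_sq' ha0.le (by positivity) h1
  have hxP : x ≤ P := by
    have : x^2 ≤ P^2 := by nlinarith
    exact le_of_sq_le_sq' hx (by positivity) this
  have hyQ : y ≤ Q := by
    have : y^2 ≤ Q^2 := by nlinarith
    exact le_of_sq_le_sq' hy (by positivity) this
  have hPQ : P^2*Q^2 = 1 + x^2 + y^2 + x^2*y^2 := by rw [hP2, hQ2]; ring
  have hx2y2 : x^2*y^2 ≤ P^2*Q^2 := by nlinarith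
  -- a*b*(x*y) ≤ b^2*(P^2*Q^2)
  have t4 : a*b*(x*y) ≤ b^2*(P^2*Q^2) := by
    have h1 : a*b*(x*y) ≤ (b*P)*b*(x*y) :=
      mul_le_mul_of_nonneg_right (mul_le_mul_of_nonneg_right haP hb0.le) hxy0
    have h2 : x*y ≤ P*Q := mul_le_mul hxP hyQ hy hP0.le
    have h3 : (b*P)*b*(x*y) ≤ (b*P)*b*(P*Q) := by
      apply mul_le_mul_of_nonneg_left h2
      positivity
    have h4 : (b*P)*b*(P*Q) ≤ b^2*(P^2*Q^2) := by
      nlinarith [mul_le_mul_of_nonneg_left hQ1 (show (0:ℝ) ≤ b^2*P^2*Q by positivity)]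
    linarith
  have key : (a*b)*(2*(a*b - d - c^2)) ≤ 2*(c^2*x^2 + c^2*y^2 + x^2*y^2) + 2*(a*b*(x*y)) := by
    have m1 := mul_le_mul_of_nonneg_left hd2 (show (0:ℝ) ≤ 2*(a*b) by positivity)
    have m2 := mul_le_mul_of_nonneg_left hcab (show (0:ℝ) ≤ 2*c^2 by positivity)
    nlinarith [hab2]
  have t1 : c^2*x^2 ≤ b^2*(P^2*Q^2) :=
    mul_le_mul hcb (by nlinarith) (sq_nonneg x) (sq_nonneg b)
  have t2 : c^2*y^2 ≤ b^2*(P^2*Q^2) :=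
    mul_le_mul hcb (by nlinarith) (sq_nonneg y) (sq_nonneg b)
  have t3 : x^2*y^2 ≤ b^2*(P^2*Q^2) :=
    le_trans hx2y2 (le_mul_of_one_le_left (by positivity) hb1)
  have nn : (0:ℝ) ≤ b^2*(P^2*Q^2) := by positivity
  linarith

lemma arithE (c x y d a b : ℝ) (hx : 0 ≤ x) (hy : 0 ≤ y)
    (ha2 : a^2 = c^2 + x^2) (hb2 : b^2 = c^2 + y^2) (ha0 : 0 < a) (hb0 : 0 < b)
    (hd1 : d ≤ x*y) :
    c^2*a^2 ≤ (2*(a*b - d + c^2))*(a*b) := by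
  have hab2 : a^2*b^2 = (c^2+x^2)*(c^2+y^2) := by rw [ha2, hb2]
  have h5 : a^2*b^2 - x^2*y^2 = c^4 + c^2*x^2 + c^2*y^2 := by
    linear_combination hab2
  have hc2a : c^2*a^2 = c^4 + c^2*x^2 := by rw [ha2]; ring
  have m1 := mul_le_mul_of_nonneg_left hd1 (show (0:ℝ) ≤ 2*(a*b) by positivity)
  linarith [sq_nonneg (a*b - x*y), sq_nonneg (c*y), mul_nonneg (mul_nonneg ha0.le hb0.le) (sq_nonneg c)]


/-- Let `c ≥ 1`, `p, q ∈ ℝ³`, `g = √(2(p⁰q⁰ − p·q − c²))` and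
`s = 2(p⁰q⁰ − p·q + c²)`.  Then `s = g² + 4c²` and:
(i) `c|p−q|/√(p⁰q⁰) ≤ g ≤ |p−q|`;
(ii) `g ≤ 5·min{⟨p⟩⟨q⟩√(q⁰/p⁰), ⟨p⟩⟨q⟩√(p⁰/q⁰)}`;
(iii) `4c² ≤ s ≤ 4p⁰q⁰`;
(iv) `s ≥ c²·max{p⁰/q⁰, q⁰/p⁰}`. -/
theorem stmt1 (c : ℝ) (hc : 1 ≤ c) (p q : E3) (g s : ℝ)
    (hg : g = Real.sqrt (2 * (pZ c p * pZ c q - dotp p q - c ^ 2)))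
    (hs : s = 2 * (pZ c p * pZ c q - dotp p q + c ^ 2)) :
    s = g ^ 2 + 4 * c ^ 2 ∧
    (c * ‖p - q‖ / Real.sqrt (pZ c p * pZ c q) ≤ g ∧ g ≤ ‖p - q‖) ∧
    g ≤ 5 * min (jb p * jb q * Real.sqrt (pZ c q / pZ c p))
          (jb p * jb q * Real.sqrt (pZ c p / pZ c q)) ∧
    (4 * c ^ 2 ≤ s ∧ s ≤ 4 * (pZ c p * pZ c q)) ∧
    c ^ 2 * max (pZ c p / pZ c q) (pZ c q / pZ c p) ≤ s := by
  have hc0 : (0:ℝ) < c := lt_of_lt_of_le one_pos hc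
  set x := ‖p‖ with hxdef
  set y := ‖q‖ with hydef
  set a := pZ c p with hadef
  set b := pZ c q with hbdef
  set d := dotp p q with hddef
  set P := jb p with hPdef
  set Q := jb q with hQdef
  have hx : 0 ≤ x := norm_nonneg _
  have hy : 0 ≤ y := norm_nonneg _
  have ha2 : a^2 = c^2 + x^2 := Real.sq_sqrt (by positivity)
  have hb2 : b^2 = c^2 + y^2 := Real.sq_sqrt (by positivity)
  have ha0 : 0 < a := Real.sqrt_pos.mpr (by positivity)
  have hb0 : 0 < b := Real.sqrt_pos.mpr (by positivity)
  have hP2 : P^2 = 1 + x^2 := Real.sq_sqrt (by positivity)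
  have hQ2 : Q^2 = 1 + y^2 := Real.sq_sqrt (by positivity)
  have hP0 : 0 < P := Real.sqrt_pos.mpr (by positivity)
  have hQ0 : 0 < Q := Real.sqrt_pos.mpr (by positivity)
  have hdi : d = inner ℝ p q := rfl
  have hdabs : |d| ≤ x*y := by rw [hdi]; exact abs_real_inner_le_norm p q
  have hd1 : d ≤ x*y := (abs_le.mp hdabs).2
  have hd2 : -(x*y) ≤ d := (abs_le.mp hdabs).1
  have hn2 : ‖p - q‖^2 = x^2 + y^2 - 2*d := by
    have h := norm_sub_sq_real p q
    rw [hdi]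
    linarith [h]
  have hA : c^2 + x*y ≤ a*b := arithA c x y a b hx hy ha2 hb2 ha0 hb0
  have hG0 : 0 ≤ 2*(a*b - d - c^2) := by nlinarith
  have hg0 : 0 ≤ g := hg ▸ Real.sqrt_nonneg _
  have hg2 : g^2 = 2*(a*b - d - c^2) := by
    rw [hg]; exact Real.sq_sqrt hG0
  refine ⟨by rw [hs, hg2]; ring, ⟨?_, ?_⟩, ?_, ⟨?_, ?_⟩, ?_⟩
  · -- (i) lower
    have hab0 : 0 < a*b := mul_pos ha0 hb0
    have hsq : (c * ‖p - q‖ / Real.sqrt (a*b))^2 ≤ g^2 := by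
      have h1 : (c * ‖p - q‖ / Real.sqrt (a*b))^2 = c^2*(x^2 + y^2 - 2*d) / (a*b) := by
        rw [div_pow, mul_pow, Real.sq_sqrt hab0.le, hn2]
      rw [h1, hg2, div_le_iff₀ hab0]
      have := arithB c x y d a b hx hy ha2 hb2 ha0 hb0 hd1
      linarith
    exact le_of_sq_le_sq' (by positivity) hg0 hsq
  · -- (i) upper
    have hsq : g^2 ≤ ‖p - q‖^2 := by
      rw [hg2, hn2]
      nlinarith [sq_nonneg (a - b)]
    exact le_of_sq_le_sq' hg0 (norm_nonneg _) hsq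
  · -- (ii)
    have key1 : g ≤ 5 * (P * Q * Real.sqrt (b / a)) := by
      have hD := arithD c x y d a b P Q hc hx hy ha2 hb2 ha0 hb0 hP2 hQ2 hP0 hQ0 hd2
      have hsq : g^2 ≤ (5 * (P * Q * Real.sqrt (b / a)))^2 := by
        have hba : (Real.sqrt (b/a))^2 = b/a := Real.sq_sqrt (by positivity)
        have hR2 : (5 * (P * Q * Real.sqrt (b / a)))^2 = 25*(P^2*Q^2)*b/a := by
          rw [mul_pow, mul_pow, mul_pow, hba]; ring
        rw [hR2, hg2, le_div_iff₀ ha0]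
        have h' : (2*(a*b - d - c^2)*a)*b ≤ (25*(P^2*Q^2)*b)*b := by nlinarith [hD]
        exact le_of_mul_le_mul_right h' hb0
      exact le_of_sq_le_sq' hg0 (by positivity) hsq
    have key2 : g ≤ 5 * (P * Q * Real.sqrt (a / b)) := by
      have hd2' : -(y*x) ≤ d := by rwa [mul_comm]
      have hD := arithD c y x d b a Q P hc hy hx hb2 ha2 hb0 ha0 hQ2 hP2 hQ0 hP0 hd2'
      have hsq : g^2 ≤ (5 * (P * Q * Real.sqrt (a / b)))^2 := by
        have hba : (Real.sqrt (a/b))^2 = a/b := Real.sq_sqrt (by positivity)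
        have hR2 : (5 * (P * Q * Real.sqrt (a / b)))^2 = 25*(Q^2*P^2)*a/b := by
          rw [mul_pow, mul_pow, mul_pow, hba]; ring
        rw [hR2, hg2, le_div_iff₀ hb0]
        have h' : (2*(a*b - d - c^2)*b)*a ≤ (25*(Q^2*P^2)*a)*a := by nlinarith [hD]
        exact le_of_mul_le_mul_right h' ha0
      exact le_of_sq_le_sq' hg0 (by positivity) hsq
    rcases le_total (P * Q * Real.sqrt (b / a)) (P * Q * Real.sqrt (a / b)) with h | h
    · rw [min_eq_left h]; exact key1
    · rw [min_eq_right h]; exact key2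
  · -- 4c^2 ≤ s
    rw [hs]; linarith [hG0]
  · -- s ≤ 4ab
    rw [hs]; linarith [hA, hd2]
  · -- (iv)
    have hE1 := arithE c x y d a b hx hy ha2 hb2 ha0 hb0 hd1
    have hd1' : d ≤ y*x := by rwa [mul_comm]
    have hE2 := arithE c y x d b a hy hx hb2 ha2 hb0 ha0 hd1'
    have e1 : c^2 * (a/b) ≤ s := by
      rw [mul_div_assoc', div_le_iff₀ hb0, hs]
      have h' : (c^2*a)*a ≤ (2 * (a * b - d + c ^ 2) * b)*a := by nlinarith [hE1]
      exact le_of_mul_le_mul_right h' ha0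
    have e2 : c^2 * (b/a) ≤ s := by
      rw [mul_div_assoc', div_le_iff₀ ha0, hs]
      have h' : (c^2*b)*b ≤ (2 * (a * b - d + c ^ 2) * a)*b := by nlinarith [hE2]
      exact le_of_mul_le_mul_right h' hb0
    rcases le_total (a/b) (b/a) with h | h
    · rw [max_eq_right h]; exact e2
    · rw [max_eq_left h]; exact e1

end
end

section
/- For every real c ≥ 1 and all p, q ∈ ℝ³, the quantity D(p,q) := ((p⁰q⁰ − p·q)² − c⁴)/c² satisfies the two two-sided bounds: (1/4)|p−q|²·max{⟨p⟩⁻², ⟨q⟩⁻²} ≤ D(p,q) ≤ 25⟨p⟩²⟨q⟩²·min{⟨p⟩², ⟨q⟩²}, and c²|p−q|²/(p⁰q⁰) ≤ D(p,q) ≤ (p⁰q⁰/c²)|p−q|². -/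
open Real MeasureTheory
open scoped BigOperators

noncomputable section

/-- `D(p,q) = ((p⁰q⁰ − p·q)² − c⁴)/c²`. -/
def Dfun (c : ℝ) (p q : E3) : ℝ := ((pZ c p * pZ c q - dotp p q) ^ 2 - c ^ 4) / c ^ 2

set_option maxHeartbeats 1000000 in
lemma keyineq (c a b np nq s : ℝ) (hc : 1 ≤ c) (hnp : 0 ≤ np) (hnq : 0 ≤ nq)
    (ha : 0 < a) (hb : 0 < b) (ha2 : a ^ 2 = c ^ 2 + np ^ 2) (hb2 : b ^ 2 = c ^ 2 + nq ^ 2)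
    (hs1 : s ≤ np * nq) (hs2 : -(np * nq) ≤ s) :
    (c ^ 2 * (np ^ 2 - 2 * s + nq ^ 2) ≤ 4 * (1 + np ^ 2) * ((a * b - s) ^ 2 - c ^ 4)) ∧
    ((a * b - s) ^ 2 - c ^ 4 ≤ 25 * c ^ 2 * (1 + np ^ 2) ^ 2 * (1 + nq ^ 2)) ∧
    (c ^ 4 * (np ^ 2 - 2 * s + nq ^ 2) ≤ (a * b) * ((a * b - s) ^ 2 - c ^ 4)) ∧
    ((a * b - s) ^ 2 - c ^ 4 ≤ (a * b) * (np ^ 2 - 2 * s + nq ^ 2)) := by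
  have hc2 : 1 ≤ c ^ 2 := by nlinarith
  set w : ℝ := a * b with hw_def
  clear_value w
  have hw : 0 < w := hw_def ▸ mul_pos ha hb
  have hwsq : w ^ 2 = (c ^ 2 + np ^ 2) * (c ^ 2 + nq ^ 2) := by
    rw [hw_def, mul_pow, ha2, hb2]
  set r : ℝ := np ^ 2 - 2 * s + nq ^ 2 with hr_def
  set G : ℝ := np ^ 2 * nq ^ 2 - s ^ 2 with hG_def
  set X : ℝ := (w - s) ^ 2 - c ^ 4 with hX_def
  clear_value r G X
  have hXmul : X = (w - s - c ^ 2) * (w - s + c ^ 2) := by linear_combination hX_def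
  have hG : 0 ≤ G := by
    rw [hG_def]
    nlinarith [mul_nonneg (sub_nonneg.2 hs1) (by linarith : 0 ≤ np * nq + s)]
  have hr0 : 0 ≤ r := by rw [hr_def]; nlinarith [sq_nonneg (np - nq)]
  have hmw : c ^ 2 + np * nq ≤ w := by
    have h0 : 0 ≤ c ^ 2 + np * nq := by positivity
    have h1 : (c ^ 2 + np * nq) ^ 2 ≤ w ^ 2 := by
      nlinarith [hwsq, mul_nonneg (sq_nonneg c) (sq_nonneg (np - nq))]
    exact (pow_le_pow_iff_left₀ h0 hw.le two_ne_zero).mp h1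
  have hN : 0 ≤ c ^ 2 * r + G := by nlinarith
  have hws : 0 < w + s + c ^ 2 := by nlinarith
  have hwms : 0 < w + c ^ 2 - s := by nlinarith
  have hid : (w - s - c ^ 2) * (w + s + c ^ 2) = c ^ 2 * r + G := by
    linear_combination hwsq - c ^ 2 * hr_def - hG_def
  have hA : 0 ≤ w - s - c ^ 2 := by
    by_contra h
    push_neg at h
    nlinarith [mul_pos hws (by linarith : 0 < -(w - s - c ^ 2))]
  have hX0 : 0 ≤ X := by
    rw [hXmul]
    exact mul_nonneg hA (by linarith : (0:ℝ) ≤ w - s + c ^ 2)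
  have hid2 : X * (w + s + c ^ 2) = (c ^ 2 * r + G) * (w + c ^ 2 - s) := by
    linear_combination (w - s + c ^ 2) * hid + (w + s + c ^ 2) * hXmul
  -- lower bound 1 : c^2 r ≤ 4(1+P) X
  have low1 : c ^ 2 * r ≤ 4 * (1 + np ^ 2) * X := by
    have k1 : nq ≤ b := by nlinarith
    have k2 : np < a := by nlinarith
    have k3 : s ≤ np * b := le_trans hs1 (mul_le_mul_of_nonneg_left k1 hnp)
    have e2 : (a + np) * (a + b - np) = w + c ^ 2 + np * b := by linear_combination ha2 - hw_def
    have e4 : (a - np) * (a + b + np) = w + c ^ 2 - np * b := by linear_combination ha2 - hw_def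
    have s2 : X * (w + s + c ^ 2) ≤ X * ((a + np) * (a + b - np)) := by
      rw [e2]; nlinarith [mul_nonneg hX0 (by linarith : (0:ℝ) ≤ np * b - s)]
    have s3 : c ^ 2 * r * (w + c ^ 2 - s) ≤ (c ^ 2 * r + G) * (w + c ^ 2 - s) := by
      nlinarith [mul_nonneg hG hwms.le]
    have s4 : c ^ 2 * r * ((a - np) * (a + b + np)) ≤ c ^ 2 * r * (w + c ^ 2 - s) := by
      rw [e4]
      nlinarith [mul_nonneg (mul_nonneg (sq_nonneg c) hr0)
        (by linarith : (0:ℝ) ≤ np * b - s)]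
    have s5 : c ^ 2 * r * ((a - np) * (a + b - np)) ≤ c ^ 2 * r * ((a - np) * (a + b + np)) := by
      nlinarith [mul_nonneg (mul_nonneg (mul_nonneg (sq_nonneg c) hr0)
        (by linarith : (0:ℝ) ≤ a - np)) (by linarith : (0:ℝ) ≤ 2 * np)]
    have k5 : c ^ 2 * r * (a - np) ≤ X * (a + np) := by
      have hd : (0:ℝ) < a + b - np := by linarith
      have h6 : (c ^ 2 * r * (a - np)) * (a + b - np) ≤ (X * (a + np)) * (a + b - np) := by
        linarith [s2, s3, s4, s5, hid2]
      exact le_of_mul_le_mul_right h6 hd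
    have k6 : c ^ 4 * r ≤ X * (a + np) ^ 2 := by
      have h7 := mul_le_mul_of_nonneg_right k5 (by linarith : (0:ℝ) ≤ a + np)
      have e5 : c ^ 2 * r * (a - np) * (a + np) = c ^ 4 * r := by
        linear_combination (c ^ 2 * r) * ha2
      linarith [h7, e5]
    have hsq : (a + np) ^ 2 ≤ 4 * c ^ 2 * (1 + np ^ 2) := by
      nlinarith [sq_nonneg (a - np)]
    have k7 : X * (a + np) ^ 2 ≤ X * (4 * c ^ 2 * (1 + np ^ 2)) :=
      mul_le_mul_of_nonneg_left hsq hX0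
    have h8 : c ^ 2 * (c ^ 2 * r) ≤ c ^ 2 * (4 * (1 + np ^ 2) * X) := by linarith [k6, k7]
    have hcp : (0:ℝ) < c ^ 2 := by positivity
    exact le_of_mul_le_mul_left h8 hcp
  -- upper bound 1 : X ≤ 25 c^2 (1+P)^2 (1+Q)
  have up1 : X ≤ 25 * c ^ 2 * (1 + np ^ 2) ^ 2 * (1 + nq ^ 2) := by
    set m : ℝ := np * nq with hm_def
    clear_value m
    have hm0 : 0 ≤ m := hm_def ▸ mul_nonneg hnp hnq
    have u1 : X * (w + c ^ 2 - m) ≤ (c ^ 2 * r + G) * (w + c ^ 2 + m) := by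
      have t1 : X * (w + c ^ 2 - m) ≤ X * (w + s + c ^ 2) := by
        nlinarith [mul_nonneg hX0 (by linarith : (0:ℝ) ≤ s + m)]
      have t2 : (c ^ 2 * r + G) * (w + c ^ 2 - s) ≤ (c ^ 2 * r + G) * (w + c ^ 2 + m) := by
        nlinarith [mul_nonneg hN (by linarith : (0:ℝ) ≤ m + s)]
      linarith [hid2]
    have u2 : w + c ^ 2 + m ≤ 2 * w := by linarith
    have u3 : c ^ 2 * (c ^ 2 + np ^ 2 + nq ^ 2) ≤ 2 * w * (w + c ^ 2 - m) := by
      have e : w ^ 2 - m ^ 2 = c ^ 4 + c ^ 2 * (np ^ 2 + nq ^ 2) := by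
        rw [hm_def]; linear_combination hwsq
      linarith [e, sq_nonneg (w - m), mul_pos hw (show (0:ℝ) < c ^ 2 by positivity)]
    have u5 : X * (c ^ 2 * (c ^ 2 + np ^ 2 + nq ^ 2)) ≤ 4 * w ^ 2 * (c ^ 2 * r + G) := by
      have t3 : X * (c ^ 2 * (c ^ 2 + np ^ 2 + nq ^ 2)) ≤ X * (2 * w * (w + c ^ 2 - m)) :=
        mul_le_mul_of_nonneg_left u3 hX0
      have t4 : (2 * w) * (X * (w + c ^ 2 - m)) ≤ (2 * w) * ((c ^ 2 * r + G) * (w + c ^ 2 + m)) :=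
        mul_le_mul_of_nonneg_left u1 (by linarith)
      have t45 : (c ^ 2 * r + G) * (w + c ^ 2 + m) ≤ (c ^ 2 * r + G) * (2 * w) :=
        mul_le_mul_of_nonneg_left u2 hN
      have t5 : (2 * w) * ((c ^ 2 * r + G) * (w + c ^ 2 + m)) ≤
          (2 * w) * ((c ^ 2 * r + G) * (2 * w)) :=
        mul_le_mul_of_nonneg_left t45 (by linarith)
      linarith [t3, t4, t5]
    have u4 : w ^ 2 ≤ c ^ 2 * (c ^ 2 + np ^ 2 + nq ^ 2) * (1 + np ^ 2) := by
      rw [hwsq]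
      linarith [mul_nonneg (mul_nonneg (sq_nonneg np) (sq_nonneg nq))
        (by linarith : (0:ℝ) ≤ c ^ 2 - 1), mul_nonneg (mul_nonneg (sq_nonneg c) (sq_nonneg c)) (sq_nonneg np),
        mul_nonneg (sq_nonneg c) (mul_nonneg (sq_nonneg np) (sq_nonneg np)),
        mul_nonneg (sq_nonneg c) (mul_nonneg (sq_nonneg np) (sq_nonneg nq))]
    have u6 : X ≤ 4 * (1 + np ^ 2) * (c ^ 2 * r + G) := by
      have hpos : (0:ℝ) < c ^ 2 * (c ^ 2 + np ^ 2 + nq ^ 2) := by positivity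
      have h9 : 4 * w ^ 2 * (c ^ 2 * r + G) ≤
          (4 * (1 + np ^ 2) * (c ^ 2 * r + G)) * (c ^ 2 * (c ^ 2 + np ^ 2 + nq ^ 2)) := by
        have := mul_le_mul_of_nonneg_left u4 (by positivity : (0:ℝ) ≤ 4 * (c ^ 2 * r + G))
        linarith [this]
      have h10 : X * (c ^ 2 * (c ^ 2 + np ^ 2 + nq ^ 2)) ≤
          (4 * (1 + np ^ 2) * (c ^ 2 * r + G)) * (c ^ 2 * (c ^ 2 + np ^ 2 + nq ^ 2)) :=
        le_trans u5 h9
      exact le_of_mul_le_mul_right h10 hpos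
    have u9 : c ^ 2 * r + G ≤ 2 * c ^ 2 * (1 + np ^ 2) * (1 + nq ^ 2) := by
      linarith [sq_nonneg s, sq_nonneg c, hc2,
        mul_nonneg (sq_nonneg c) (sq_nonneg (np - nq)),
        mul_nonneg (sq_nonneg c) (show (0:ℝ) ≤ np * nq + s by rw [← hm_def]; linarith), hm_def, hr_def, hG_def,
        mul_nonneg (mul_nonneg (sq_nonneg np) (sq_nonneg nq))
          (by linarith : (0:ℝ) ≤ 2 * c ^ 2 - 1)]
    have u10' : 4 * (1 + np ^ 2) * (c ^ 2 * r + G) ≤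
        4 * (1 + np ^ 2) * (2 * c ^ 2 * (1 + np ^ 2) * (1 + nq ^ 2)) :=
      mul_le_mul_of_nonneg_left u9 (show (0:ℝ) ≤ 4 * (1 + np ^ 2) by positivity)
    have u10 : X ≤ 4 * (1 + np ^ 2) * (2 * c ^ 2 * (1 + np ^ 2) * (1 + nq ^ 2)) :=
      le_trans u6 u10'
    linarith [u10, mul_nonneg (mul_nonneg (sq_nonneg c) (sq_nonneg (1 + np ^ 2)))
      (by positivity : (0:ℝ) ≤ 1 + nq ^ 2)]
  -- lower bound 2 : c^4 r ≤ w X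
  have low2 : c ^ 4 * r ≤ w * X := by
    have h1 : c ^ 2 + s ≤ w := by linarith
    have e1 : w * X * (w + s + c ^ 2) =
        c ^ 2 * ((c ^ 2 * r + G) * (w + s + c ^ 2)) +
        (c ^ 2 * r + G) * ((w + c ^ 2) * (w - c ^ 2 - s)) := by
      linear_combination w * ((w - s + c ^ 2) * hid) + w * (w + s + c ^ 2) * hXmul
    have e3 : 0 ≤ (c ^ 2 * r + G) * ((w + c ^ 2) * (w - c ^ 2 - s)) :=
      mul_nonneg hN (mul_nonneg (by linarith) (by linarith))
    have e2 : c ^ 4 * r * (w + s + c ^ 2) ≤ c ^ 2 * ((c ^ 2 * r + G) * (w + s + c ^ 2)) := by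
      linarith [mul_nonneg (sq_nonneg c) (mul_nonneg hG hws.le)]
    have h2 : c ^ 4 * r * (w + s + c ^ 2) ≤ w * X * (w + s + c ^ 2) := by linarith
    exact le_of_mul_le_mul_right h2 hws
  -- upper bound 2 : X ≤ w r
  have up2 : X ≤ w * r := by
    set m : ℝ := np * nq with hm_def
    clear_value m
    have hm0 : 0 ≤ m := hm_def ▸ mul_nonneg hnp hnq
    have hGr : 2 * G ≤ r * (m + s) := by
      rw [hG_def, hr_def, hm_def]
      linarith [mul_nonneg (show (0:ℝ) ≤ np * nq + s by rw [← hm_def]; linarith)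
        (sq_nonneg (np - nq))]
    have core : (2 * c ^ 2 + (m + s)) * (w + c ^ 2 - s) ≤ 2 * w * (w + c ^ 2 + s) := by
      linarith [mul_nonneg (by linarith : (0:ℝ) ≤ s + m) (by linarith : (0:ℝ) ≤ w + c ^ 2 - m),
        sq_nonneg (s + m),
        mul_nonneg (by linarith : (0:ℝ) ≤ w + c ^ 2) (by linarith : (0:ℝ) ≤ w - c ^ 2 - m)]
    have e4 : X * (w + s + c ^ 2) ≤ w * r * (w + s + c ^ 2) := by
      have t1 : 0 ≤ (r * (m + s) - 2 * G) * (w + c ^ 2 - s) :=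
        mul_nonneg (by linarith) hwms.le
      have t2 : 0 ≤ r * (2 * w * (w + c ^ 2 + s) - (2 * c ^ 2 + (m + s)) * (w + c ^ 2 - s)) :=
        mul_nonneg hr0 (by linarith)
      linarith [hid2, t1, t2]
    exact le_of_mul_le_mul_right e4 hws
  exact ⟨low1, up1, low2, up2⟩

set_option maxHeartbeats 1000000 in
/-- For every `c ≥ 1` and all `p, q ∈ ℝ³`, the quantity
`D(p,q) = ((p⁰q⁰ − p·q)² − c⁴)/c²` satisfies the two two-sided bounds
`(1/4)|p−q|²·max{⟨p⟩⁻², ⟨q⟩⁻²} ≤ D(p,q) ≤ 25⟨p⟩²⟨q⟩²·min{⟨p⟩², ⟨q⟩²}` and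
`c²|p−q|²/(p⁰q⁰) ≤ D(p,q) ≤ (p⁰q⁰/c²)|p−q|²`. -/
theorem stmt2 (c : ℝ) (hc : 1 ≤ c) (p q : E3) :
    (1 / 4 * ‖p - q‖ ^ 2 * max (jb p ^ 2)⁻¹ (jb q ^ 2)⁻¹ ≤ Dfun c p q ∧
      Dfun c p q ≤ 25 * jb p ^ 2 * jb q ^ 2 * min (jb p ^ 2) (jb q ^ 2)) ∧
    (c ^ 2 * ‖p - q‖ ^ 2 / (pZ c p * pZ c q) ≤ Dfun c p q ∧
      Dfun c p q ≤ pZ c p * pZ c q / c ^ 2 * ‖p - q‖ ^ 2) := by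
  have hc0 : (0:ℝ) < c := lt_of_lt_of_le one_pos hc
  have hc2 : (0:ℝ) < c ^ 2 := by positivity
  have ha : 0 < pZ c p := Real.sqrt_pos.2 (by positivity)
  have hb : 0 < pZ c q := Real.sqrt_pos.2 (by positivity)
  have ha2 : (pZ c p) ^ 2 = c ^ 2 + ‖p‖ ^ 2 := Real.sq_sqrt (by positivity)
  have hb2 : (pZ c q) ^ 2 = c ^ 2 + ‖q‖ ^ 2 := Real.sq_sqrt (by positivity)
  have hjp : jb p ^ 2 = 1 + ‖p‖ ^ 2 := Real.sq_sqrt (by positivity)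
  have hjq : jb q ^ 2 = 1 + ‖q‖ ^ 2 := Real.sq_sqrt (by positivity)
  have habs : |dotp p q| ≤ ‖p‖ * ‖q‖ := abs_real_inner_le_norm p q
  have hs1 : dotp p q ≤ ‖p‖ * ‖q‖ := (abs_le.mp habs).2
  have hs2 : -(‖p‖ * ‖q‖) ≤ dotp p q := (abs_le.mp habs).1
  have hs1' : dotp p q ≤ ‖q‖ * ‖p‖ := by rwa [mul_comm]
  have hs2' : -(‖q‖ * ‖p‖) ≤ dotp p q := by rwa [mul_comm]
  have hnorm : ‖p - q‖ ^ 2 = ‖p‖ ^ 2 - 2 * dotp p q + ‖q‖ ^ 2 := by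
    rw [dotp]; exact norm_sub_sq_real p q
  have key1 := keyineq c (pZ c p) (pZ c q) ‖p‖ ‖q‖ (dotp p q) hc (norm_nonneg p)
    (norm_nonneg q) ha hb ha2 hb2 hs1 hs2
  have key2 := keyineq c (pZ c q) (pZ c p) ‖q‖ ‖p‖ (dotp p q) hc (norm_nonneg q)
    (norm_nonneg p) hb ha hb2 ha2 hs1' hs2'
  rw [show pZ c q * pZ c p = pZ c p * pZ c q from mul_comm _ _] at key2
  simp only [Dfun]
  rw [hnorm]
  refine ⟨⟨?_, ?_⟩, ?_, ?_⟩
  · -- lower bound 1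
    rcases le_total ((jb p ^ 2)⁻¹) ((jb q ^ 2)⁻¹) with h | h
    · rw [max_eq_right h]
      rw [hjq, inv_eq_one_div, mul_one_div,
        div_le_div_iff₀ (by positivity) hc2]
      linarith [key2.1]
    · rw [max_eq_left h]
      rw [hjp, inv_eq_one_div, mul_one_div,
        div_le_div_iff₀ (by positivity) hc2]
      linarith [key1.1]
  · -- upper bound 1
    rcases le_total (jb p ^ 2) (jb q ^ 2) with h | h
    · rw [min_eq_left h, div_le_iff₀ hc2, hjp, hjq]
      nlinarith [key1.2.1]
    · rw [min_eq_right h, div_le_iff₀ hc2, hjp, hjq]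
      nlinarith [key2.2.1]
  · -- lower bound 2
    rw [div_le_div_iff₀ (mul_pos ha hb) hc2]
    linarith [key1.2.2.1]
  · -- upper bound 2
    rw [div_mul_eq_mul_div, div_le_div_iff₀ hc2 hc2]
    nlinarith [mul_le_mul_of_nonneg_right key1.2.2.2 hc2.le]

end
end

section
/- There exists a constant C > 0 such that for every real c ≥ 1 and all p, q ∈ ℝ³ with p ≠ q: (i) |(c²/(p⁰q⁰))·((p⁰q⁰ − p·q)²/c⁴) − 1| ≤ 4⟨p⟩²⟨q⟩²/c²; (ii) |[((p⁰q⁰ − p·q)² − c⁴)/c²]^{−3/2} − |p−q|^{−3}| ≤ C·(⟨p⟩²⟨q⟩²/c²)·|p−q|^{−3}. -/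
open Real MeasureTheory
open scoped BigOperators

noncomputable section

set_option maxHeartbeats 1000000

/-- Algebraic core: positivity of `A = (T-s)² - c⁴` and the two-sided comparison
with `r²` up to factors `(c² + XY)/c²`. -/
private lemma aux_alg (c X Y s r T : ℝ) (hc0 : (0:ℝ) < c)
    (hX : 0 ≤ X) (hY : 0 ≤ Y)
    (hsl : s ≤ X*Y) (hsg : -(X*Y) ≤ s) (hXY0 : 0 ≤ X*Y)
    (hr : 0 < r) (hr2 : r ^ 2 = X ^ 2 + Y ^ 2 - 2 * s)
    (hT2 : T ^ 2 = (c ^ 2 + X ^ 2) * (c ^ 2 + Y ^ 2))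
    (h2c1 : 2 * c ^ 2 ≤ T + c ^ 2 - s) (h2c2 : 2 * c ^ 2 ≤ T + c ^ 2 + s)
    (hden1 : 0 < T + c ^ 2 - s) (hden2 : 0 < T + c ^ 2 + s)
    (hs2 : s ^ 2 ≤ X ^ 2 * Y ^ 2) :
    0 < (T - s) ^ 2 - c ^ 4 ∧
    ((T - s) ^ 2 - c ^ 4) * c ^ 2 ≤ r ^ 2 * (c ^ 2 + X * Y) ^ 2 ∧
    r ^ 2 * c ^ 4 ≤ ((T - s) ^ 2 - c ^ 4) * (c ^ 2 + X * Y) := by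
  set w : ℝ := X ^ 2 * Y ^ 2 - s ^ 2 with hw
  have hw0 : 0 ≤ w := by simp [hw]; linarith
  set A : ℝ := (T - s) ^ 2 - c ^ 4 with hA
  have hkey : A * (T + c ^ 2 + s) = (c ^ 2 * r ^ 2 + w) * (T + c ^ 2 - s) := by
    rw [hA, hw]
    linear_combination (T + c ^ 2 - s) * hT2 - c ^ 2 * (T + c ^ 2 - s) * hr2
  have hnum : 0 < c ^ 2 * r ^ 2 + w := by positivity
  have hApos : 0 < A := by
    nlinarith [mul_pos hnum hden1]
  have hw1 : w ≤ X ^ 2 * r ^ 2 := by rw [hw, hr2]; nlinarith [sq_nonneg (X ^ 2 - s)]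
  have hw2 : w ≤ Y ^ 2 * r ^ 2 := by rw [hw, hr2]; nlinarith [sq_nonneg (Y ^ 2 - s)]
  have hwd : w ≤ X * Y * r ^ 2 := by
    nlinarith [mul_le_mul hw1 hw2 hw0 (by positivity), sq_nonneg r,
      mul_nonneg hXY0 (sq_nonneg r)]
  have s1 : c ^ 2 * r ^ 2 + w ≤ r ^ 2 * (c ^ 2 + X * Y) := by
    linarith [hwd, (by ring : r ^ 2 * (c ^ 2 + X * Y) = c ^ 2 * r ^ 2 + X * Y * r ^ 2)]
  have s2 : c ^ 2 * (T + c ^ 2 - s) ≤ (c ^ 2 + X * Y) * (T + c ^ 2 + s) := by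
    nlinarith [mul_nonneg hXY0 (by linarith : (0:ℝ) ≤ T - c ^ 2 + s),
      mul_nonneg (by positivity : (0:ℝ) ≤ c ^ 2) (by linarith : (0:ℝ) ≤ X * Y + s)]
  have hU : A * c ^ 2 ≤ r ^ 2 * (c ^ 2 + X * Y) ^ 2 := by
    have hmm := mul_le_mul s1 s2 (by positivity) (by positivity)
    have h4 : A * c ^ 2 * (T + c ^ 2 + s)
        ≤ r ^ 2 * (c ^ 2 + X * Y) ^ 2 * (T + c ^ 2 + s) := by
      nlinarith [hkey, hmm]
    exact le_of_mul_le_mul_right h4 hden2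
  have s3 : c ^ 2 * (T + c ^ 2 + s) ≤ (c ^ 2 + X * Y) * (T + c ^ 2 - s) := by
    nlinarith [mul_nonneg hXY0 (by linarith : (0:ℝ) ≤ T - c ^ 2 - s),
      mul_nonneg (by positivity : (0:ℝ) ≤ c ^ 2) (by linarith : (0:ℝ) ≤ X * Y - s)]
  have hL : r ^ 2 * c ^ 4 ≤ A * (c ^ 2 + X * Y) := by
    have e1 : c ^ 2 * r ^ 2 * (c ^ 2 * (T + c ^ 2 + s))
        ≤ c ^ 2 * r ^ 2 * ((c ^ 2 + X * Y) * (T + c ^ 2 - s)) :=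
      mul_le_mul_of_nonneg_left s3 (by positivity)
    have e2 : c ^ 2 * r ^ 2 * ((c ^ 2 + X * Y) * (T + c ^ 2 - s))
        ≤ (c ^ 2 * r ^ 2 + w) * ((c ^ 2 + X * Y) * (T + c ^ 2 - s)) :=
      mul_le_mul_of_nonneg_right (by linarith) (by positivity)
    have hkey2 : A * (T + c ^ 2 + s) * (c ^ 2 + X * Y)
        = (c ^ 2 * r ^ 2 + w) * (T + c ^ 2 - s) * (c ^ 2 + X * Y) := by
      linear_combination (c ^ 2 + X * Y) * hkey
    have h4 : r ^ 2 * c ^ 4 * (T + c ^ 2 + s) ≤ A * (c ^ 2 + X * Y) * (T + c ^ 2 + s) := by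
      nlinarith [e1, e2, hkey2]
    exact le_of_mul_le_mul_right h4 hden2
  exact ⟨hApos, hU, hL⟩

/-- rpow step: from the two-sided quadratic comparison deduce the `-3/2`-power bound. -/
private lemma aux_rpow (c X Y A r : ℝ) (hc0 : (0:ℝ) < c) (hc2 : (1:ℝ) ≤ c^2)
    (hX : 0 ≤ X) (hY : 0 ≤ Y) (hXY0 : 0 ≤ X*Y)
    (hr : 0 < r)
    (hXYN : X * Y ≤ (1 + X ^ 2) * (1 + Y ^ 2))
    (hX2Y2N : X ^ 2 * Y ^ 2 ≤ (1 + X ^ 2) * (1 + Y ^ 2))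
    (hApos : 0 < A)
    (hU : A * c ^ 2 ≤ r ^ 2 * (c ^ 2 + X * Y) ^ 2)
    (hL : r ^ 2 * c ^ 4 ≤ A * (c ^ 2 + X * Y)) :
    |(A / c ^ 2) ^ (-(3 : ℝ) / 2) - r ^ (-(3 : ℝ))|
      ≤ 3 * ((1 + X ^ 2) * (1 + Y ^ 2) / c ^ 2) * r ^ (-(3 : ℝ)) := by
  set V : ℝ := (c ^ 2 + X * Y) / c ^ 2 with hV
  have hV1 : (1:ℝ) ≤ V := by
    rw [hV, le_div_iff₀ (by positivity)]; nlinarith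
  have hV0 : (0:ℝ) < V := lt_of_lt_of_le one_pos hV1
  set Dv : ℝ := A / c ^ 2 with hDv
  have hDv0 : 0 < Dv := by positivity
  have hst1 : r ^ 2 ≤ Dv * V := by
    rw [hDv, hV, div_mul_div_comm, le_div_iff₀ (by positivity)]
    nlinarith [hL]
  have hst2 : Dv ≤ r ^ 2 * V ^ 2 := by
    rw [hDv, hV, div_pow, mul_div_assoc', div_le_div_iff₀ (by positivity) (by positivity)]
    nlinarith [hU]
  rw [show (-(3:ℝ)/2) = -((3:ℝ)/2) by norm_num, Real.rpow_neg hDv0.le,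
    show (-(3:ℝ)) = -((3:ℝ)) by norm_num, Real.rpow_neg hr.le]
  set P : ℝ := Dv ^ ((3:ℝ)/2) with hP
  set Q : ℝ := r ^ (3:ℝ) with hQ
  have hP0 : 0 < P := Real.rpow_pos_of_pos hDv0 _
  have hQ0 : 0 < Q := Real.rpow_pos_of_pos hr _
  have hr23 : (r ^ 2 : ℝ) ^ ((3:ℝ)/2) = Q := by
    rw [hQ, ← Real.rpow_natCast r 2, ← Real.rpow_mul hr.le]; norm_num
  have hV23 : ((V ^ 2 : ℝ)) ^ ((3:ℝ)/2) = V ^ 3 := by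
    rw [← Real.rpow_natCast V 2, ← Real.rpow_mul hV0.le, ← Real.rpow_natCast V 3]; norm_num
  have hV32 : V ^ ((3:ℝ)/2) ≤ V ^ 2 := by
    calc V ^ ((3:ℝ)/2) ≤ V ^ ((2:ℕ):ℝ) :=
          Real.rpow_le_rpow_of_exponent_le hV1 (by norm_num)
      _ = V ^ 2 := Real.rpow_natCast V 2
  have hQle : Q ≤ P * V ^ 2 := by
    have h1 : Q ≤ P * V ^ ((3:ℝ)/2) := by
      rw [← hr23, ← Real.mul_rpow hDv0.le hV0.le]
      exact Real.rpow_le_rpow (by positivity) hst1 (by norm_num)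
    calc Q ≤ P * V ^ ((3:ℝ)/2) := h1
      _ ≤ P * V ^ 2 := mul_le_mul_of_nonneg_left hV32 hP0.le
  have hPle : P ≤ Q * V ^ 3 := by
    calc P ≤ (r ^ 2 * V ^ 2) ^ ((3:ℝ)/2) :=
          Real.rpow_le_rpow hDv0.le hst2 (by norm_num)
      _ = Q * V ^ 3 := by
          rw [Real.mul_rpow (by positivity) (by positivity), hr23, hV23]
  have hup : P⁻¹ ≤ V ^ 2 * Q⁻¹ := by
    have h : (1:ℝ)/P ≤ V ^ 2 / Q := by
      rw [div_le_div_iff₀ hP0 hQ0]; nlinarith [hQle]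
    simpa [one_div, div_eq_mul_inv] using h
  have hlow : Q⁻¹ * (V ^ 3)⁻¹ ≤ P⁻¹ := by
    have h : (1:ℝ)/(Q * V ^ 3) ≤ 1 / P := by
      rw [div_le_div_iff₀ (by positivity) hP0]; nlinarith [hPle]
    simpa [one_div, mul_inv, mul_comm] using h
  have hVm1 : 3 * (V - 1) ≤ 3 * ((1 + X ^ 2) * (1 + Y ^ 2) / c ^ 2) := by
    have h : V - 1 = X * Y / c ^ 2 := by rw [hV]; field_simp; ring
    rw [h]
    gcongr
  have hV2b : V ^ 2 ≤ 1 + 3 * ((1 + X ^ 2) * (1 + Y ^ 2) / c ^ 2) := by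
    have h1 : V ^ 2 = (c ^ 2 + X * Y) ^ 2 / c ^ 4 := by
      rw [hV, div_pow]; ring_nf
    have h2 : (1 + 3 * ((1 + X ^ 2) * (1 + Y ^ 2) / c ^ 2)) * c ^ 4
        = c ^ 4 + 3 * ((1 + X ^ 2) * (1 + Y ^ 2)) * c ^ 2 := by
      field_simp
    rw [h1, div_le_iff₀ (by positivity), h2]
    nlinarith [hX2Y2N, hXYN, hc2, sq_nonneg (X*Y)]
  have hV3inv : 1 - 3 * (V - 1) ≤ (V ^ 3)⁻¹ := by
    rw [← one_div, le_div_iff₀ (by positivity)]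
    nlinarith [sq_nonneg (V - 1), hV1]
  rw [abs_le]
  constructor
  · have k1 : Q⁻¹ * (1 - 3 * (V - 1)) ≤ Q⁻¹ * (V ^ 3)⁻¹ :=
      mul_le_mul_of_nonneg_left hV3inv (by positivity)
    have k2 : Q⁻¹ * (3 * (V - 1)) ≤ Q⁻¹ * (3 * ((1 + X ^ 2) * (1 + Y ^ 2) / c ^ 2)) :=
      mul_le_mul_of_nonneg_left hVm1 (by positivity)
    nlinarith [hlow, k1, k2]
  · have k3 : Q⁻¹ * (V ^ 2) ≤ Q⁻¹ * (1 + 3 * ((1 + X ^ 2) * (1 + Y ^ 2) / c ^ 2)) :=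
      mul_le_mul_of_nonneg_left hV2b (by positivity)
    nlinarith [hup, k3]

private lemma aux_stmt3 (c X Y s r T : ℝ) (hc : 1 ≤ c) (hX : 0 ≤ X) (hY : 0 ≤ Y)
    (hs : |s| ≤ X * Y) (hr : 0 < r) (hr2 : r ^ 2 = X ^ 2 + Y ^ 2 - 2 * s)
    (hT2 : T ^ 2 = (c ^ 2 + X ^ 2) * (c ^ 2 + Y ^ 2)) (hT0 : 0 < T) :
    |c ^ 2 / T * ((T - s) ^ 2 / c ^ 4) - 1| ≤ 4 * (1 + X ^ 2) * (1 + Y ^ 2) / c ^ 2 ∧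
    |(((T - s) ^ 2 - c ^ 4) / c ^ 2) ^ (-(3 : ℝ) / 2) - r ^ (-(3 : ℝ))|
      ≤ 3 * ((1 + X ^ 2) * (1 + Y ^ 2) / c ^ 2) * r ^ (-(3 : ℝ)) := by
  have hc0 : (0:ℝ) < c := lt_of_lt_of_le one_pos hc
  have hc2 : (1:ℝ) ≤ c ^ 2 := by nlinarith
  have hsl : s ≤ X * Y := le_trans (le_abs_self s) hs
  have hsg : -(X * Y) ≤ s := (abs_le.mp hs).1
  have hXY0 : 0 ≤ X * Y := mul_nonneg hX hY
  have hTge : c ^ 2 + X * Y ≤ T := by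
    nlinarith [sq_nonneg (X - Y), sq_nonneg (T - (c ^ 2 + X * Y))]
  have h2c1 : 2 * c ^ 2 ≤ T + c ^ 2 - s := by linarith
  have h2c2 : 2 * c ^ 2 ≤ T + c ^ 2 + s := by linarith
  have hden1 : 0 < T + c ^ 2 - s := by nlinarith
  have hden2 : 0 < T + c ^ 2 + s := by nlinarith
  have hN1 : 1 ≤ (1 + X ^ 2) * (1 + Y ^ 2) := by
    nlinarith [sq_nonneg X, sq_nonneg Y, sq_nonneg (X*Y)]
  have hXYN : X * Y ≤ (1 + X ^ 2) * (1 + Y ^ 2) := by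
    nlinarith [sq_nonneg (X - Y), sq_nonneg (X*Y)]
  have hs2 : s ^ 2 ≤ X ^ 2 * Y ^ 2 := by nlinarith [sq_abs s, abs_nonneg s]
  have hX2Y2N : X ^ 2 * Y ^ 2 ≤ (1 + X ^ 2) * (1 + Y ^ 2) := by
    nlinarith [sq_nonneg X, sq_nonneg Y]
  have hTc2 : c ^ 2 ≤ T := by nlinarith
  constructor
  · -- part (i)
    have hgN : 2 * c ^ 2 * (T - c ^ 2) ≤ c ^ 2 * ((1 + X ^ 2) * (1 + Y ^ 2)) := by
      nlinarith [hT2, hTc2, sq_nonneg X, sq_nonneg Y]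
    have key1 : |(T - s) ^ 2 - c ^ 2 * T| ≤ 4 * ((1 + X ^ 2) * (1 + Y ^ 2)) * T := by
      rw [abs_le]
      constructor
      · nlinarith [mul_le_mul_of_nonneg_left hgN hT0.le,
          mul_le_mul_of_nonneg_left hsg (by positivity : (0:ℝ) ≤ 2*T),
          mul_le_mul_of_nonneg_left hXYN (by positivity : (0:ℝ) ≤ 2*T),
          mul_le_mul_of_nonneg_left hN1
            (by nlinarith : (0:ℝ) ≤ ((1+X^2)*(1+Y^2)) * (T - 1))]
      · nlinarith [mul_le_mul_of_nonneg_left hgN hc0.le, sq_nonneg (T - s - c^2),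
          mul_le_mul_of_nonneg_left hN1
            (by nlinarith : (0:ℝ) ≤ ((1+X^2)*(1+Y^2)) * (T - c^2))]
    have hrw : c ^ 2 / T * ((T - s) ^ 2 / c ^ 4) - 1
        = ((T - s) ^ 2 - c ^ 2 * T) / (c ^ 2 * T) := by
      field_simp
    rw [hrw, abs_div, abs_of_pos (by positivity : (0:ℝ) < c ^ 2 * T),
      div_le_div_iff₀ (by positivity) (by positivity)]
    nlinarith [key1, mul_le_mul_of_nonneg_left key1 (le_of_lt (by positivity : (0:ℝ) < c^2))]
  · -- part (ii)
    obtain ⟨hApos, hU, hL⟩ := aux_alg c X Y s r T hc0 hX hY hsl hsg hXY0 hr hr2 hT2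
      h2c1 h2c2 hden1 hden2 hs2
    exact aux_rpow c X Y ((T - s) ^ 2 - c ^ 4) r hc0 hc2 hX hY hXY0 hr hXYN hX2Y2N
      hApos hU hL

/-- There is `C > 0` such that for all `c ≥ 1` and `p ≠ q`:
(i) `|(c²/(p⁰q⁰))·((p⁰q⁰ − p·q)²/c⁴) − 1| ≤ 4⟨p⟩²⟨q⟩²/c²`;
(ii) `|[((p⁰q⁰ − p·q)² − c⁴)/c²]^{−3/2} − |p−q|^{−3}| ≤ C·(⟨p⟩²⟨q⟩²/c²)·|p−q|^{−3}`. -/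
theorem stmt3 :
    ∃ C : ℝ, 0 < C ∧ ∀ (c : ℝ), 1 ≤ c → ∀ p q : E3, p ≠ q →
      |c ^ 2 / (pZ c p * pZ c q) * ((pZ c p * pZ c q - dotp p q) ^ 2 / c ^ 4) - 1|
          ≤ 4 * jb p ^ 2 * jb q ^ 2 / c ^ 2 ∧
      |Dfun c p q ^ (-(3 : ℝ) / 2) - ‖p - q‖ ^ (-(3 : ℝ))|
          ≤ C * (jb p ^ 2 * jb q ^ 2 / c ^ 2) * ‖p - q‖ ^ (-(3 : ℝ)) := by
  refine ⟨3, by norm_num, ?_⟩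
  intro c hc p q hpq
  have hc0 : (0:ℝ) < c := lt_of_lt_of_le one_pos hc
  have hp0 : 0 < pZ c p := Real.sqrt_pos.mpr (by positivity)
  have hq0 : 0 < pZ c q := Real.sqrt_pos.mpr (by positivity)
  have hT0 : 0 < pZ c p * pZ c q := mul_pos hp0 hq0
  have hT2 : (pZ c p * pZ c q) ^ 2 = (c ^ 2 + ‖p‖ ^ 2) * (c ^ 2 + ‖q‖ ^ 2) := by
    rw [mul_pow, pZ, pZ, Real.sq_sqrt (by positivity), Real.sq_sqrt (by positivity)]
  have hcs : |dotp p q| ≤ ‖p‖ * ‖q‖ := abs_real_inner_le_norm p q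
  have hr : 0 < ‖p - q‖ := by
    rw [norm_pos_iff]; exact sub_ne_zero.mpr hpq
  have hr2 : ‖p - q‖ ^ 2 = ‖p‖ ^ 2 + ‖q‖ ^ 2 - 2 * dotp p q := by
    have h : ‖p - q‖ ^ 2 = ‖p‖ ^ 2 - 2 * (inner ℝ p q : ℝ) + ‖q‖ ^ 2 :=
      norm_sub_sq_real p q
    rw [dotp]; linarith
  have hjp : jb p ^ 2 = 1 + ‖p‖ ^ 2 := Real.sq_sqrt (by positivity)
  have hjq : jb q ^ 2 = 1 + ‖q‖ ^ 2 := Real.sq_sqrt (by positivity)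
  obtain ⟨h1, h2⟩ := aux_stmt3 c ‖p‖ ‖q‖ (dotp p q) ‖p - q‖ (pZ c p * pZ c q)
    hc (norm_nonneg p) (norm_nonneg q) hcs hr hr2 hT2 hT0
  refine ⟨?_, ?_⟩
  · rw [hjp, hjq]; exact h1
  · rw [hjp, hjq, Dfun]; exact h2

end
end

section
/- Let c > 0, p, q ∈ ℝ³, and let p̄ ∈ ℝ³ satisfy p·p̄ = 0. Then the matrix S^c(p,q) satisfies the three identities: (i) Σ_{i,j} p_i S^{c,ij}(p,q) p_j = ((p⁰)²/c²)·|p×q|² = ((p⁰)²/c²)·|q×(p−q)|²; (ii) Σ_{i,j} p_i S^{c,ij}(p,q) p̄_j = −(q·p)(q·p̄) + (1/c²)(p⁰q⁰ − p·q)|p|²(q·p̄); (iii) Σ_{i,j} p̄_i S^{c,ij}(p,q) p̄_j = (1/c²)[(p⁰q⁰ − p·q)² − c⁴]·|p̄|² − (q·p̄)². -/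
open Real MeasureTheory
open scoped BigOperators

noncomputable section

/-- The cross product on `ℝ³`. -/
def cross3 (p q : E3) : E3 :=
  (WithLp.equiv 2 (Fin 3 → ℝ)).symm
    ![p 1 * q 2 - p 2 * q 1, p 2 * q 0 - p 0 * q 2, p 0 * q 1 - p 1 * q 0]

/-- The matrix `S^c(p,q)` with entries
`S^{c,ij}(p,q) = [((p⁰q⁰ − p·q)² − c⁴)/c²]·δ_{ij} − (p−q)_i(p−q)_j
 + [(p⁰q⁰ − p·q − c²)/c²]·(p_i q_j + q_i p_j)`. -/
def Smat (c : ℝ) (p q : E3) (i j : Fin 3) : ℝ :=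
  ((pZ c p * pZ c q - dotp p q) ^ 2 - c ^ 4) / c ^ 2 * (if i = j then 1 else 0)
    - (p i - q i) * (p j - q j)
    + (pZ c p * pZ c q - dotp p q - c ^ 2) / c ^ 2 * (p i * q j + q i * p j)

set_option maxHeartbeats 1000000

lemma norm_sq_coord (p : E3) : ‖p‖^2 = p 0^2 + p 1^2 + p 2^2 := by
  rw [EuclideanSpace.norm_sq_eq]
  simp [Fin.sum_univ_three]

/-- Let `c > 0`, `p, q ∈ ℝ³`, and `p̄ ⊥ p`.  Then:
(i) `Σ p_i S^{c,ij} p_j = ((p⁰)²/c²)|p×q|² = ((p⁰)²/c²)|q×(p−q)|²`;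
(ii) `Σ p_i S^{c,ij} p̄_j = −(q·p)(q·p̄) + (1/c²)(p⁰q⁰ − p·q)|p|²(q·p̄)`;
(iii) `Σ p̄_i S^{c,ij} p̄_j = (1/c²)[(p⁰q⁰ − p·q)² − c⁴]|p̄|² − (q·p̄)²`. -/
theorem stmt6 (c : ℝ) (hc : 0 < c) (p q pbar : E3) (hperp : dotp p pbar = 0) :
    ((∑ i, ∑ j, p i * Smat c p q i j * p j) = (pZ c p) ^ 2 / c ^ 2 * ‖cross3 p q‖ ^ 2 ∧
      (∑ i, ∑ j, p i * Smat c p q i j * p j)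
        = (pZ c p) ^ 2 / c ^ 2 * ‖cross3 q (p - q)‖ ^ 2) ∧
    (∑ i, ∑ j, p i * Smat c p q i j * pbar j)
      = -(dotp q p * dotp q pbar)
        + 1 / c ^ 2 * (pZ c p * pZ c q - dotp p q) * ‖p‖ ^ 2 * dotp q pbar ∧
    (∑ i, ∑ j, pbar i * Smat c p q i j * pbar j)
      = 1 / c ^ 2 * ((pZ c p * pZ c q - dotp p q) ^ 2 - c ^ 4) * ‖pbar‖ ^ 2
        - dotp q pbar ^ 2 := by
  have hc2 : (c:ℝ)^2 ≠ 0 := pow_ne_zero _ (ne_of_gt hc)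
  have hu : (c^2)⁻¹ * c^2 = (1:ℝ) := inv_mul_cancel₀ hc2
  have ha : pZ c p ^ 2 = c^2 + (p 0^2 + p 1^2 + p 2^2) := by
    rw [pZ, Real.sq_sqrt (by positivity), norm_sq_coord]
  have hb : pZ c q ^ 2 = c^2 + (q 0^2 + q 1^2 + q 2^2) := by
    rw [pZ, Real.sq_sqrt (by positivity), norm_sq_coord]
  have hcr1 : ‖cross3 p q‖^2 = (p 1 * q 2 - p 2 * q 1)^2 + (p 2 * q 0 - p 0 * q 2)^2
      + (p 0 * q 1 - p 1 * q 0)^2 := by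
    rw [norm_sq_coord]; simp [cross3]
  have hcr2 : ‖cross3 q (p - q)‖^2 =
      (q 1 * (p 2 - q 2) - q 2 * (p 1 - q 1))^2 + (q 2 * (p 0 - q 0) - q 0 * (p 2 - q 2))^2
      + (q 0 * (p 1 - q 1) - q 1 * (p 0 - q 0))^2 := by
    rw [norm_sq_coord]; simp [cross3]
  have hperp' : p 0 * pbar 0 + p 1 * pbar 1 + p 2 * pbar 2 = 0 := by
    have h' := hperp
    simp [dotp, PiLp.inner_apply, Fin.sum_univ_three] at h'; linarith
  set a := pZ c p with hadef
  set b := pZ c q with hbdef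
  set P := p 0^2 + p 1^2 + p 2^2 with hP
  set Q := q 0^2 + q 1^2 + q 2^2 with hQ
  set d := p 0*q 0 + p 1*q 1 + p 2*q 2 with hd
  set e := q 0*pbar 0 + q 1*pbar 1 + q 2*pbar 2 with he
  set K := (p 1 * q 2 - p 2 * q 1)^2 + (p 2 * q 0 - p 0 * q 2)^2
      + (p 0 * q 1 - p 1 * q 0)^2 with hK
  have hdotpq : dotp p q = d := by
    simp [dotp, PiLp.inner_apply, Fin.sum_univ_three, hd]; ring
  have hdotqp : dotp q p = d := by
    simp [dotp, PiLp.inner_apply, Fin.sum_univ_three, hd]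
  have hdotqe : dotp q pbar = e := by
    simp [dotp, PiLp.inner_apply, Fin.sum_univ_three, he]; ring
  refine ⟨⟨?_, ?_⟩, ?_, ?_⟩
  · simp only [Smat, Fin.sum_univ_three, hcr1, hdotpq, Fin.isValue, Fin.reduceEq,
      if_true, if_false, one_ne_zero, ite_true, ite_false]
    norm_num
    linear_combination ((c^2)⁻¹*P*b^2 - (c^2)⁻¹*K) * ha
      + (c^2)⁻¹*P*(c^2+P) * hb + (P-d)^2 * hu
  · simp only [Smat, Fin.sum_univ_three, hcr2, hdotpq, Fin.isValue, Fin.reduceEq,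
      if_true, if_false, one_ne_zero, ite_true, ite_false, PiLp.sub_apply]
    norm_num
    linear_combination ((c^2)⁻¹*P*b^2 - (c^2)⁻¹*((q 1 * (p 2 - q 2) - q 2 * (p 1 - q 1))^2
      + (q 2 * (p 0 - q 0) - q 0 * (p 2 - q 2))^2
      + (q 0 * (p 1 - q 1) - q 1 * (p 0 - q 0))^2)) * ha
      + (c^2)⁻¹*P*(c^2+P) * hb + (P-d)^2 * hu
  · simp only [Smat, Fin.sum_univ_three, hdotpq, hdotqp, hdotqe, norm_sq_coord, Fin.isValue, Fin.reduceEq,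
      if_true, if_false, one_ne_zero, ite_true, ite_false]
    norm_num
    linear_combination ((c^2)⁻¹*((a*b-d)^2-c^4) - (P-d) + (c^2)⁻¹*(a*b-d-c^2)*d) * hperp'
      + (-P*e) * hu
  · simp only [Smat, Fin.sum_univ_three, hdotpq, hdotqp, hdotqe, norm_sq_coord, Fin.isValue, Fin.reduceEq,
      if_true, if_false, one_ne_zero, ite_true, ite_false]
    norm_num
    linear_combination (-(p 0*pbar 0 + p 1*pbar 1 + p 2*pbar 2) + 2*e
      + 2*(c^2)⁻¹*e*(a*b-d-c^2)) * hperp'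

end
end

section
/- There exists a constant C > 0 such that for every real c ≥ 1, all p, q ∈ ℝ³ with p ≠ q, and all indices i, j ∈ {1,2,3}, the relativistic and classical Landau collision kernels satisfy |Φ^{c,ij}(p,q) − Φ^{∞,ij}(p,q)| ≤ (C/c²)·⟨p⟩⁵·⟨q⟩⁵·|p−q|^{−1}. -/
open Real MeasureTheory
open scoped BigOperators

set_option maxHeartbeats 1600000

noncomputable section

private lemma le_of_sq' {x y : ℝ} (hx : 0 ≤ x) (hy : 0 ≤ y) (h : x^2 ≤ y^2) : x ≤ y := by
  nlinarith

private lemma rpow_neg32 (x : ℝ) (hx : 0 ≤ x) : x ^ (-(3:ℝ)/2) = ((Real.sqrt x)^3)⁻¹ := by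
  rw [show (-(3:ℝ)/2) = -(3/2) by norm_num, Real.rpow_neg hx,
    show ((3:ℝ)/2) = (1/2)*3 by norm_num, Real.rpow_mul hx, Real.sqrt_eq_rpow,
    ← Real.rpow_natCast (x ^ ((1:ℝ)/2)) 3]
  norm_num

private lemma tau_lb (c u v na nb s : ℝ) (hc : 1 ≤ c) (hna : 0 ≤ na) (hnb : 0 ≤ nb)
    (hu2 : u^2 = c^2 + na^2) (hv2 : v^2 = c^2 + nb^2) (hu0 : 0 < u) (hv0 : 0 < v)
    (hs : |s| ≤ na*nb) : c^2 ≤ u*v - s := by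
  have hc0 : (0:ℝ) < c := lt_of_lt_of_le one_pos hc
  have hc20 : (0:ℝ) < c^2 := by positivity
  have huv2 : (u*v)^2 = (c^2+na^2)*(c^2+nb^2) := by rw [mul_pow, hu2, hv2]
  have h1 : (u*v - (c^2+na*nb))*(u*v + (c^2+na*nb)) = c^2*(na-nb)^2 := by
    linear_combination huv2
  have h2 : 0 < u*v + (c^2+na*nb) := by
    have := mul_pos hu0 hv0
    have := mul_nonneg hna hnb
    linarith
  have h3 : 0 ≤ u*v - (c^2+na*nb) :=
    nonneg_of_mul_nonneg_left (by rw [h1]; positivity) h2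
  have := abs_le.mp hs
  linarith

/-- `Λ^c(p,q) = ((p⁰q⁰ − p·q)²/c⁴)·[((p⁰q⁰ − p·q)² − c⁴)/c²]^{−3/2}`. -/
def Lam (c : ℝ) (p q : E3) : ℝ :=
  (pZ c p * pZ c q - dotp p q) ^ 2 / c ^ 4 *
    (((pZ c p * pZ c q - dotp p q) ^ 2 - c ^ 4) / c ^ 2) ^ (-(3 : ℝ) / 2)

/-- The relativistic Landau collision kernel
`Φ^{c,ij}(p,q) = (c/p⁰)(c/q⁰)·Λ^c(p,q)·S^{c,ij}(p,q)`. -/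
def Phi (c : ℝ) (p q : E3) (i j : Fin 3) : ℝ :=
  c / pZ c p * (c / pZ c q) * Lam c p q * Smat c p q i j

/-- The classical Landau collision kernel
`Φ^{∞,ij}(p,q) = |p−q|⁻³·(|p−q|²·δ_{ij} − (p−q)_i(p−q)_j)`. -/
def PhiInf (p q : E3) (i j : Fin 3) : ℝ :=
  (‖p - q‖ ^ 3)⁻¹ *
    (‖p - q‖ ^ 2 * (if i = j then 1 else 0) - (p i - q i) * (p j - q j))

private lemma coord_abs_le (x : E3) (k : Fin 3) : |x k| ≤ ‖x‖ := by
  have h : ‖x‖ ^ 2 = ∑ m, (x m) ^ 2 := by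
    rw [EuclideanSpace.norm_eq, Real.sq_sqrt (by positivity)]
    simp [sq_abs]
  have h2 : (x k) ^ 2 ≤ ‖x‖ ^ 2 := by
    rw [h]
    exact Finset.single_le_sum (f := fun m => (x m)^2) (fun m _ => sq_nonneg _)
      (Finset.mem_univ k)
  nlinarith [abs_nonneg (x k), norm_nonneg x, sq_abs (x k)]

private lemma aux_core (c u v P Q na nb s r g pi pj qi qj d : ℝ)
    (hc : 1 ≤ c) (hna : 0 ≤ na) (hnb : 0 ≤ nb)
    (hu2 : u^2 = c^2 + na^2) (hv2 : v^2 = c^2 + nb^2) (hu0 : 0 < u) (hv0 : 0 < v)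
    (hP2 : P^2 = 1 + na^2) (hQ2 : Q^2 = 1 + nb^2) (hP0 : 0 < P) (hQ0 : 0 < Q)
    (hs : |s| ≤ na*nb)
    (hr2 : r^2 = na^2 + nb^2 - 2*s) (hr0 : 0 < r)
    (hnn : |na - nb| ≤ r)
    (hpi : |pi| ≤ na) (hpj : |pj| ≤ na) (hqi : |qi| ≤ nb) (hqj : |qj| ≤ nb)
    (hwi : |pi - qi| ≤ r) (hwj : |pj - qj| ≤ r)
    (hg2 : g^2 = ((u*v - s)^2 - c^4)/c^2) (hgnn : 0 ≤ g)
    (hd : d = 0 ∨ d = 1) :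
    |c/u*(c/v)*((u*v-s)^2/c^4 * (g^3)⁻¹) *
        (((u*v-s)^2-c^4)/c^2 * d - (pi-qi)*(pj-qj) + (u*v-s-c^2)/c^2*(pi*qj+qi*pj))
      - (r^3)⁻¹ * (r^2*d - (pi-qi)*(pj-qj))|
      ≤ 300/c^2 * (P*Q)^5 * r⁻¹ := by
  have hc0 : (0:ℝ) < c := lt_of_lt_of_le one_pos hc
  have hc20 : (0:ℝ) < c^2 := by positivity
  have hc2one : 1 ≤ c^2 := by linarith [mul_le_mul hc hc zero_le_one hc0.le]
  have huc : c ≤ u := le_of_sq' hc0.le hu0.le (by linarith [hu2, sq_nonneg na])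
  have hvc : c ≤ v := le_of_sq' hc0.le hv0.le (by linarith [hv2, sq_nonneg nb])
  have huv0 : 0 < u*v := mul_pos hu0 hv0
  have huv_c2 : c^2 ≤ u*v := by linarith [mul_le_mul huc hvc hc0.le hu0.le]
  have hP1 : 1 ≤ P := le_of_sq' zero_le_one hP0.le (by linarith [hP2, sq_nonneg na])
  have hQ1 : 1 ≤ Q := le_of_sq' zero_le_one hQ0.le (by linarith [hQ2, sq_nonneg nb])
  have hW1 : 1 ≤ P*Q := by linarith [mul_le_mul hP1 hQ1 zero_le_one hP0.le]
  have hnaP : na ≤ P := le_of_sq' hna hP0.le (by linarith [hP2])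
  have hnbQ : nb ≤ Q := le_of_sq' hnb hQ0.le (by linarith [hQ2])
  have hcP2 : c^2*P^2 = c^2*(1+na^2) := by rw [hP2]
  have hcQ2 : c^2*Q^2 = c^2*(1+nb^2) := by rw [hQ2]
  have hone_na : 0 ≤ (c^2-1)*na^2 := mul_nonneg (by linarith) (sq_nonneg na)
  have hone_nb : 0 ≤ (c^2-1)*nb^2 := mul_nonneg (by linarith) (sq_nonneg nb)
  have huP : u ≤ c*P :=
    le_of_sq' hu0.le (mul_nonneg hc0.le hP0.le) (by linarith [hu2, hcP2, hone_na])
  have hvQ : v ≤ c*Q :=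
    le_of_sq' hv0.le (mul_nonneg hc0.le hQ0.le) (by linarith [hv2, hcQ2, hone_nb])
  have huvW : u*v ≤ c^2*(P*Q) := by
    linarith [mul_le_mul huP hvQ hv0.le (mul_nonneg hc0.le hP0.le)]
  have habW : na*nb ≤ P*Q := by
    linarith [mul_le_mul hnaP hnbQ hnb hP0.le]
  have hsabs := abs_le.mp hs
  have huv2 : (u*v)^2 = (c^2+na^2)*(c^2+nb^2) := by rw [mul_pow, hu2, hv2]
  have hf3 : c^2 + na*nb ≤ u*v := by
    linarith [tau_lb c u v na nb (na*nb) hc hna hnb hu2 hv2 hu0 hv0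
      (by rw [abs_of_nonneg (mul_nonneg hna hnb)])]
  have htau : c^2 ≤ u*v - s := by linarith [hsabs.2]
  have htau0 : 0 < u*v - s := lt_of_lt_of_le hc20 htau
  set D : ℝ := u*v - s - c^2 with hDdef
  have hD0 : 0 ≤ D := by simp only [hDdef]; linarith
  have h2D : 2*D = r^2 - (u-v)^2 := by
    simp only [hDdef]; linear_combination -hr2 + hu2 + hv2
  have h2Dr : 2*D ≤ r^2 := by linarith [h2D, sq_nonneg (u-v)]
  have hid : (u*v-c^2)*(u+v)^2 - u*v*((na+nb)^2)
      = (u*v - na*nb - c^2)*(u*v - na*nb + c^2) := by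
    linear_combination (u*v + v^2 - c^2) * hu2 + (u*v + na^2) * hv2
  have hf8 : u*v*((na+nb)^2) ≤ (u*v-c^2)*(u+v)^2 := by
    have hprod : 0 ≤ (u*v - na*nb - c^2)*(u*v - na*nb + c^2) :=
      mul_nonneg (by linarith) (by linarith)
    linarith [hid, hprod]
  have hid2 : (u-v)^2*(u+v)^2 = (na^2-nb^2)^2 := by
    linear_combination (u^2 - v^2 + na^2 - nb^2) * (hu2 - hv2)
  have hf7 : (na^2-nb^2)^2 ≤ r^2*((na+nb)^2) := by
    have h' := abs_le.mp hnn
    have h'' : (na-nb)^2 ≤ r^2 := sq_le_sq' h'.1 h'.2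
    linarith [mul_le_mul_of_nonneg_right h'' (sq_nonneg (na+nb))]
  have hf9 : u*v*(u-v)^2 ≤ r^2*(u*v-c^2) := by
    have h1 : u*v*(u-v)^2*(u+v)^2 ≤ r^2*(u*v-c^2)*(u+v)^2 := by
      calc u*v*(u-v)^2*(u+v)^2 = u*v*((na^2-nb^2)^2) := by rw [mul_assoc, hid2]
        _ ≤ u*v*(r^2*((na+nb)^2)) := mul_le_mul_of_nonneg_left hf7 huv0.le
        _ = r^2*(u*v*((na+nb)^2)) := by ring
        _ ≤ r^2*((u*v-c^2)*(u+v)^2) := mul_le_mul_of_nonneg_left hf8 (sq_nonneg r)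
        _ = r^2*(u*v-c^2)*(u+v)^2 := by ring
    exact le_of_mul_le_mul_right h1 (pow_pos (by linarith : (0:ℝ) < u+v) 2)
  have hGS : c^2*r^2 ≤ 2*D*(u*v) := by
    have h1 : 2*D*(u*v) = (r^2 - (u-v)^2)*(u*v) := by rw [h2D]
    linarith [hf9, h1]
  have hcr20 : 0 < c^2*r^2 := by positivity
  have hDpos : 0 < D := by
    rcases lt_or_ge 0 D with h|h
    · exact h
    · exfalso
      have h2 : 2*D*(u*v) ≤ 0 :=
        mul_nonpos_iff.mpr (Or.inr ⟨by linarith, huv0.le⟩)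
      linarith [hcr20, hGS]
  have hg2' : g^2 * c^2 = (u*v-s)^2 - c^4 := by
    rw [hg2]; field_simp
  have hgD : c^2*g^2 = D^2 + 2*c^2*D := by
    simp only [hDdef]; linear_combination hg2'
  have hg0 : 0 < g := by
    rcases hgnn.lt_or_eq with h|h
    · exact h
    · exfalso
      have h2 : c^2*g^2 = 0 := by rw [← h]; ring
      have h3 : 0 < D^2 + 2*c^2*D :=
        add_pos_of_nonneg_of_pos (sq_nonneg D) (mul_pos (by positivity) hDpos)
      linarith [hgD]
  have hr2D : 2*D ≤ g^2 := by
    rcases le_or_gt (2*D) (g^2) with h|h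
    · exact h
    · exfalso
      have h2 : c^2*g^2 < c^2*(2*D) := mul_lt_mul_of_pos_left h hc20
      linarith [hgD, sq_nonneg D]
  have hguv : c^2*r^2 ≤ g^2*(u*v) := by
    have := mul_le_mul_of_nonneg_right hr2D huv0.le
    linarith [hGS]
  set W : ℝ := P*Q with hWdef
  have hW0 : 0 < W := by positivity
  have hW2 : W^2 = (1+na^2)*(1+nb^2) := by rw [hWdef, mul_pow, hP2, hQ2]
  have hr2W : r^2 ≤ 2*W^2 := by
    linarith [hW2, hsabs.1, hr2, sq_nonneg (na-nb), sq_nonneg (na*nb)]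
  have hm2W : (na+nb)^2 ≤ 2*W^2 := by
    linarith [hW2, sq_nonneg (na-nb), sq_nonneg (na*nb)]
  have huvc2 : u*v - c^2 ≤ W^2 := by
    have h1 : (u*v - c^2)*(u*v+c^2) = c^2*(na^2+nb^2) + na^2*nb^2 := by
      linear_combination huv2
    have h2 : 2*c^2 ≤ u*v + c^2 := by linarith
    have h3 : (u*v-c^2)*(2*c^2) ≤ (u*v-c^2)*(u*v+c^2) :=
      mul_le_mul_of_nonneg_left h2 (by linarith)
    have hW2c : c^2*W^2 = c^2*((1+na^2)*(1+nb^2)) := by rw [hW2]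
    have h4 : 0 ≤ (c^2-1)*(na^2*nb^2) := mul_nonneg (by linarith) (by positivity)
    have h5 : (2*c^2)*(u*v-c^2) ≤ (2*c^2)*W^2 := by
      linarith [h3, h1, hW2c, h4, mul_nonneg hc20.le (sq_nonneg W)]
    exact le_of_mul_le_mul_left h5 (by positivity)
  have hd01 : 0 ≤ d ∧ d ≤ 1 := by rcases hd with h|h <;> simp [h]
  have hPu : P ≤ u := le_of_sq' hP0.le hu0.le (by linarith [hP2, hu2])
  have hQv : Q ≤ v := le_of_sq' hQ0.le hv0.le (by linarith [hQ2, hv2])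
  have hWuv : W ≤ u*v := by
    rw [hWdef]
    exact mul_le_mul hPu hQv hQ0.le hu0.le
  have hg30 : 0 < g^3 := pow_pos hg0 3
  have hr30 : 0 < r^3 := pow_pos hr0 3
  have htri : ∀ x y : ℝ, |x - y| ≤ |x| + |y| := fun x y => by
    rw [sub_eq_add_neg]; exact (abs_add_le _ _).trans (by rw [abs_neg])
  -- rewrite the goal
  rw [← hg2]
  obtain ⟨K, hK⟩ : ∃ K, K = c/u*(c/v)*((u*v-s)^2/c^4 * (g^3)⁻¹) := ⟨_, rfl⟩
  rw [← hK]
  obtain ⟨SD, hSD⟩ : ∃ SD, SD = g^2 * d - (pi-qi)*(pj-qj) + D/c^2*(pi*qj+qi*pj) := ⟨_, rfl⟩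
  rw [← hSD]
  obtain ⟨SI, hSI⟩ : ∃ SI, SI = r^2*d - (pi-qi)*(pj-qj) := ⟨_, rfl⟩
  rw [← hSI]
  have hK0 : 0 < K := by
    rw [hK]
    apply mul_pos (mul_pos (div_pos hc0 hu0) (div_pos hc0 hv0))
    exact mul_pos (div_pos (pow_pos htau0 2) (by positivity)) (inv_pos.mpr hg30)
  have hKform : K = (u*v-s)^2/(c^2*(u*v)*g^3) := by
    rw [hK]; field_simp
  have hden0 : 0 < c^2*(u*v)*g^3 := mul_pos (mul_pos hc20 huv0) hg30
  -- entry bounds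
  have habs_w : |(pi-qi)*(pj-qj)| ≤ r^2 := by
    rw [abs_mul]
    calc |pi - qi| * |pj - qj| ≤ r*r := mul_le_mul hwi hwj (abs_nonneg _) hr0.le
      _ = r^2 := by ring
  have habs_cross : |pi*qj+qi*pj| ≤ 2*W := by
    have h1 : |pi*qj| ≤ na*nb := by
      rw [abs_mul]; exact mul_le_mul hpi hqj (abs_nonneg _) hna
    have h2 : |qi*pj| ≤ na*nb := by
      rw [abs_mul]
      calc |qi| * |pj| ≤ nb*na := mul_le_mul hqi hpj (abs_nonneg _) hnb
        _ = na*nb := by ring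
    calc |pi*qj+qi*pj| ≤ |pi*qj| + |qi*pj| := abs_add_le _ _
      _ ≤ 2*W := by simp only [hWdef]; linarith
  have habsd : |d| ≤ 1 := by rcases hd with h|h <;> simp [h]
  have hSIabs : |SI| ≤ 2*r^2 := by
    rw [hSI]
    calc |r^2*d - (pi-qi)*(pj-qj)| ≤ |r^2*d| + |(pi-qi)*(pj-qj)| := htri _ _
      _ ≤ 2*r^2 := by
          rw [abs_mul, abs_of_nonneg (sq_nonneg r)]
          linarith [mul_le_mul_of_nonneg_left habsd (sq_nonneg r), habs_w]
  have hDc20 : 0 ≤ D/c^2 := div_nonneg hD0 hc20.le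
  have hRHS : 300/c^2 * W^5 * r⁻¹ = (300*W^5)/(c^2*r) := by
    field_simp

  rcases le_or_gt (c^2) (2*W^2) with hcase | hcase
  · -- Case B : c^2 ≤ 2*W^2 : crude bound on each term
    have b1 : u*v - s ≤ 2*(u*v) := by linarith [hsabs.1, habW, hWuv]
    have b2 : (u*v-s)^2 ≤ 4*(u*v)^2 := by
      linarith [mul_nonneg (sub_nonneg.mpr b1) (by linarith : (0:ℝ) ≤ 2*(u*v)+(u*v-s))]
    have b4 : (u*v-s)^4 ≤ 16*(u*v)^4 := by
      linarith [pow_le_pow_left₀ (sq_nonneg (u*v-s)) b2 2]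
    have t1 : K*g^2 ≤ 4*W^2/r := by
      rw [hKform, div_mul_eq_mul_div, div_le_div_iff₀ hden0 hr0]
      apply le_of_sq' (mul_nonneg (mul_nonneg (sq_nonneg _) (sq_nonneg g)) hr0.le)
        (mul_nonneg (by positivity) hden0.le)
      have e1 : (u*v-s)^4*(r^2*g^4) ≤ 16*(u*v)^4*(r^2*g^4) :=
        mul_le_mul_of_nonneg_right b4 (by positivity)
      have e2 : (u*v)^3 ≤ (c^2*W)^3 := pow_le_pow_left₀ huv0.le huvW 3
      have e2' : (u*v)^3*((u*v)*r^2*g^4) ≤ (c^2*W)^3*((u*v)*r^2*g^4) :=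
        mul_le_mul_of_nonneg_right e2
          (mul_nonneg (mul_nonneg huv0.le (sq_nonneg r)) (by positivity))
      have e3 : c^4*W^3*g^4*((u*v)*(c^2*r^2)) ≤ c^4*W^3*g^4*((u*v)*(g^2*(u*v))) := by
        apply mul_le_mul_of_nonneg_left (mul_le_mul_of_nonneg_left hguv huv0.le)
        exact mul_nonneg (mul_nonneg (by positivity) (pow_nonneg hW0.le 3)) (by positivity)
      have e4 : W^3*(c^4*g^6*(u*v)^2) ≤ W^4*(c^4*g^6*(u*v)^2) :=
        mul_le_mul_of_nonneg_right (pow_le_pow_right₀ hW1 (by norm_num)) (by positivity)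
      linarith [e1, e2', e3, e4]
    have t2 : K*r^2 ≤ 4*W^3/r := by
      rw [hKform, div_mul_eq_mul_div, div_le_div_iff₀ hden0 hr0]
      apply le_of_sq' (mul_nonneg (mul_nonneg (sq_nonneg _) (sq_nonneg r)) hr0.le)
        (mul_nonneg (mul_nonneg (by norm_num) (pow_nonneg hW0.le 3)) hden0.le)
      apply le_of_mul_le_mul_right _ huv0
      have e1 : (u*v-s)^4*(r^6*(u*v)) ≤ 16*(u*v)^4*(r^6*(u*v)) :=
        mul_le_mul_of_nonneg_right b4 (mul_nonneg (by positivity) huv0.le)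
      have e2 : (u*v)^5 ≤ (c^2*W)^5 := pow_le_pow_left₀ huv0.le huvW 5
      have e2' : (u*v)^5*r^6 ≤ (c^2*W)^5*r^6 :=
        mul_le_mul_of_nonneg_right e2 (by positivity)
      have e3 : (c^2*r^2)^3 ≤ (g^2*(u*v))^3 := pow_le_pow_left₀ (by positivity) hguv 3
      have e3' : W^5*c^4*(c^2*r^2)^3 ≤ W^5*c^4*(g^2*(u*v))^3 :=
        mul_le_mul_of_nonneg_left e3 (mul_nonneg (pow_nonneg hW0.le 5) (by positivity))
      have e4 : W^5*(c^4*(g^2*(u*v))^3) ≤ W^6*(c^4*(g^2*(u*v))^3) :=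
        mul_le_mul_of_nonneg_right (pow_le_pow_right₀ hW1 (by norm_num))
          (mul_nonneg (by positivity) (pow_nonneg (mul_nonneg (sq_nonneg g) huv0.le) 3))
      linarith [e1, e2', e3', e4]
    have t3 : K*(D/c^2*(2*W)) ≤ 4*W^3/(c^2*r) := by
      have s1 : K*(D/c^2*(2*W)) ≤ K*g^2*(W/c^2) := by
        have h : D/c^2*(2*W) ≤ g^2*(W/c^2) := by
          rw [div_mul_eq_mul_div, ← mul_div_assoc, div_le_div_iff₀ hc20 hc20]
          have h6 := mul_le_mul_of_nonneg_right hr2D (mul_nonneg hW0.le hc20.le)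
          linarith [h6]
        calc K*(D/c^2*(2*W)) ≤ K*(g^2*(W/c^2)) := mul_le_mul_of_nonneg_left h hK0.le
          _ = K*g^2*(W/c^2) := by ring
      have s2 : K*g^2*(W/c^2) ≤ (4*W^2/r)*(W/c^2) :=
        mul_le_mul_of_nonneg_right t1 (div_nonneg hW0.le hc20.le)
      have s3 : (4*W^2/r)*(W/c^2) = 4*W^3/(c^2*r) := by
        rw [div_mul_div_comm, show (4*W^2*W) = 4*W^3 from by ring, mul_comm r (c^2)]
      linarith [s1, s2, s3.le, s3.ge]
    have hSDabs : |SD| ≤ g^2 + r^2 + D/c^2*(2*W) := by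
      rw [hSD]
      have e1 : |g^2*d| ≤ g^2 := by
        rw [abs_mul, abs_of_nonneg (sq_nonneg g)]
        calc g^2 * |d| ≤ g^2*1 := mul_le_mul_of_nonneg_left habsd (sq_nonneg g)
          _ = g^2 := mul_one _
      have e2 : |D/c^2*(pi*qj+qi*pj)| ≤ D/c^2*(2*W) := by
        rw [abs_mul, abs_of_nonneg hDc20]
        exact mul_le_mul_of_nonneg_left habs_cross hDc20
      calc |g^2*d - (pi-qi)*(pj-qj) + D/c^2*(pi*qj+qi*pj)|
          ≤ |g^2*d - (pi-qi)*(pj-qj)| + |D/c^2*(pi*qj+qi*pj)| := abs_add_le _ _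
        _ ≤ (|g^2*d| + |(pi-qi)*(pj-qj)|) + |D/c^2*(pi*qj+qi*pj)| := by
            linarith [htri (g^2*d) ((pi-qi)*(pj-qj))]
        _ ≤ g^2 + r^2 + D/c^2*(2*W) := by linarith [e1, habs_w, e2]
    have hmain : |K*SD - (r^3)⁻¹*SI| ≤ 4*W^2/r + 4*W^3/r + 4*W^3/(c^2*r) + 2/r := by
      have h1 : |K*SD| ≤ K*(g^2 + r^2 + D/c^2*(2*W)) := by
        rw [abs_mul, abs_of_pos hK0]
        exact mul_le_mul_of_nonneg_left hSDabs hK0.le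
      have h2 : |(r^3)⁻¹*SI| ≤ 2/r := by
        rw [abs_mul, abs_of_pos (inv_pos.mpr hr30)]
        calc (r^3)⁻¹ * |SI| ≤ (r^3)⁻¹*(2*r^2) :=
              mul_le_mul_of_nonneg_left hSIabs (inv_pos.mpr hr30).le
          _ = 2/r := by
              field_simp
      have h3 : K*(g^2 + r^2 + D/c^2*(2*W)) = K*g^2 + K*r^2 + K*(D/c^2*(2*W)) := by ring
      calc |K*SD - (r^3)⁻¹*SI| ≤ |K*SD| + |(r^3)⁻¹*SI| := htri _ _
        _ ≤ 4*W^2/r + 4*W^3/r + 4*W^3/(c^2*r) + 2/r := by linarith [t1, t2, t3]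
    rw [hRHS]
    have hnum : 4*W^2/r + 4*W^3/r + 4*W^3/(c^2*r) + 2/r
        = (4*W^2*c^2 + 4*W^3*c^2 + 4*W^3 + 2*c^2)/(c^2*r) := by
      field_simp
    have hW5 : 4*W^2*c^2 + 4*W^3*c^2 + 4*W^3 + 2*c^2 ≤ 300*W^5 := by
      have w2 : W^2 ≤ W^5 := pow_le_pow_right₀ hW1 (by norm_num)
      have w3 : W^3 ≤ W^5 := pow_le_pow_right₀ hW1 (by norm_num)
      have w4 : W^4 ≤ W^5 := pow_le_pow_right₀ hW1 (by norm_num)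
      have p1 : c^2*W^2 ≤ 2*W^2*W^2 := mul_le_mul_of_nonneg_right hcase (sq_nonneg W)
      have p2 : c^2*W^3 ≤ 2*W^2*W^3 :=
        mul_le_mul_of_nonneg_right hcase (pow_nonneg hW0.le 3)
      linarith [w2, w3, w4, p1, p2, hcase, pow_nonneg hW0.le 5]
    calc |K*SD - (r^3)⁻¹*SI| ≤ 4*W^2/r + 4*W^3/r + 4*W^3/(c^2*r) + 2/r := hmain
      _ = (4*W^2*c^2 + 4*W^3*c^2 + 4*W^3 + 2*c^2)/(c^2*r) := hnum
      _ ≤ (300*W^5)/(c^2*r) := (div_le_div_iff_of_pos_right (mul_pos hc20 hr0)).mpr hW5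

  · -- Case A : 2*W^2 < c^2
    obtain ⟨ε, hεdef⟩ : ∃ e : ℝ, e = W^2/c^2 := ⟨_, rfl⟩
    have hεc : ε*c^2 = W^2 := by rw [hεdef]; exact div_mul_cancel₀ _ hc20.ne'
    have hε0 : 0 ≤ ε := by rw [hεdef]; exact div_nonneg (sq_nonneg W) hc20.le
    have hεh : 2*ε ≤ 1 := le_of_mul_le_mul_left
      (by linarith [hεc, hcase.le] : c^2*(2*ε) ≤ c^2*1) hc20
    have huvsum : 4*c^2 ≤ (u+v)^2 := by
      linarith [mul_nonneg (show (0:ℝ) ≤ u+v-2*c by linarith)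
        (show (0:ℝ) ≤ u+v+2*c by linarith)]
    have hA0 : 4*c^2*(r^2 - 2*D) ≤ 2*(r^2*W^2) := by
      have e1 : 4*c^2*(u-v)^2 ≤ (u+v)^2*(u-v)^2 :=
        mul_le_mul_of_nonneg_right huvsum (sq_nonneg _)
      have e2 : r^2*((na+nb)^2) ≤ r^2*(2*W^2) := mul_le_mul_of_nonneg_left hm2W (sq_nonneg r)
      have h2Dc : c^2*(2*D) = c^2*(r^2 - (u-v)^2) := by rw [h2D]
      linarith [e1, e2, hid2, hf7, h2Dc]
    have hDsq : 2*(D^2) ≤ r^2*W^2 := by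
      have hda : (2*D)*(2*D) ≤ r^2*r^2 := mul_le_mul h2Dr h2Dr (by linarith) (sq_nonneg r)
      have hdb : r^2*r^2 ≤ r^2*(2*W^2) := mul_le_mul_of_nonneg_left hr2W (sq_nonneg r)
      linarith [hda, hdb]
    have hub : c^2*g^2 ≤ c^2*r^2 + r^2*W^2 := by
      have e1 : c^2*(2*D) ≤ c^2*r^2 := mul_le_mul_of_nonneg_left h2Dr hc20.le
      linarith [hgD, hDsq, e1]
    have hlb : c^2*r^2 ≤ c^2*g^2 + r^2*W^2 := by
      linarith [hA0, hgD, sq_nonneg D]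
    have hrc : r^2*(2*W^2) ≤ r^2*c^2 := mul_le_mul_of_nonneg_left hcase.le (sq_nonneg r)
    have hgr2l : r^2 ≤ 2*g^2 := le_of_mul_le_mul_left
      (by linarith [hlb, hrc] : c^2*r^2 ≤ c^2*(2*g^2)) hc20
    have hgr2u : g^2 ≤ 2*r^2 := le_of_mul_le_mul_left
      (by linarith [hub, hrc] : c^2*g^2 ≤ c^2*(2*r^2)) hc20
    have hgrl : r ≤ 2*g := le_of_sq' hr0.le (by linarith [hg0.le]) (by linarith [hgr2l, sq_nonneg g])
    have hgru : g ≤ 2*r := le_of_sq' hg0.le (by linarith [hr0.le]) (by linarith [hgr2u, sq_nonneg r])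
    have hεc_r : r^2*(ε*c^2) = r^2*W^2 := by rw [hεc]
    have habs_r2g2 : |r^2 - g^2| ≤ r^2*ε := by
      have hA : g^2 - r^2 ≤ r^2*ε := le_of_mul_le_mul_left
        (by linarith [hub, hεc_r] : c^2*(g^2-r^2) ≤ c^2*(r^2*ε)) hc20
      have hB : r^2 - g^2 ≤ r^2*ε := le_of_mul_le_mul_left
        (by linarith [hlb, hεc_r] : c^2*(r^2-g^2) ≤ c^2*(r^2*ε)) hc20
      exact abs_le.mpr ⟨by linarith, hB⟩
    have hrg0 : (0:ℝ) < r + g := by linarith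
    have habs_rg : |r - g| ≤ r*ε := by
      have e1 : |r - g| * (r+g) = |r^2 - g^2| := by
        rw [← abs_of_pos hrg0, ← abs_mul]
        congr 1
        ring
      have e2 : r^2*ε ≤ r*ε*(r+g) := by
        linarith [mul_nonneg (mul_nonneg hr0.le hε0) hg0.le]
      have e3 : |r - g| * (r+g) ≤ r*ε*(r+g) := by rw [e1]; linarith [habs_r2g2, e2]
      exact le_of_mul_le_mul_right e3 hrg0
    have hcube : |r^3 - g^3| ≤ 7*(r^3*ε) := by
      have e2 : 0 ≤ r^2+r*g+g^2 := by linarith [mul_pos hr0 hg0, sq_nonneg r, sq_nonneg g]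
      have e3 : r^2+r*g+g^2 ≤ 7*r^2 := by
        linarith [mul_le_mul_of_nonneg_left hgru hr0.le, hgr2u]
      calc |r^3 - g^3| = |r - g| * (r^2+r*g+g^2) := by
            rw [show r^3-g^3 = (r-g)*(r^2+r*g+g^2) from by ring, abs_mul, abs_of_nonneg e2]
        _ ≤ (r*ε)*(7*r^2) := mul_le_mul habs_rg e3 e2 (mul_nonneg hr0.le hε0)
        _ = 7*(r^3*ε) := by ring
    have hid3 : (u*v-s)^2 - c^2*(u*v) = c^2*g^2 - c^2*(u*v-c^2) := by
      linear_combination -hg2'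
    have hεuv0 : 0 ≤ ε*(c^2*(u*v)) := mul_nonneg hε0 (mul_nonneg hc20.le huv0.le)
    have he3 : ε*c^2*c^2 ≤ ε*c^2*(u*v) :=
      mul_le_mul_of_nonneg_left huv_c2 (mul_nonneg hε0 hc20.le)
    have hεc_c : c^2*(ε*c^2) = c^2*W^2 := by rw [hεc]
    have hAub : (u*v-s)^2 - c^2*(u*v) ≤ 5*(ε*(c^2*(u*v))) := by
      have e1 : c^2*g^2 ≤ c^2*(2*r^2) := mul_le_mul_of_nonneg_left hgr2u hc20.le
      have e2 : c^2*(2*r^2) ≤ c^2*(2*(2*W^2)) :=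
        mul_le_mul_of_nonneg_left (by linarith [hr2W]) hc20.le
      have e5 : 0 ≤ c^2*(u*v-c^2) := mul_nonneg hc20.le (by linarith)
      linarith [hid3, e1, e2, he3, hεc_c, e5, hεuv0]
    have hAlb : c^2*(u*v) - (u*v-s)^2 ≤ ε*(c^2*(u*v)) := by
      have e4 : c^2*(u*v-c^2) ≤ c^2*W^2 := mul_le_mul_of_nonneg_left huvc2 hc20.le
      linarith [hid3, e4, he3, hεc_c, mul_nonneg hc20.le (sq_nonneg g)]
    have hKg3 : |K - (g^3)⁻¹| ≤ 5*ε*(g^3)⁻¹ := by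
      have e1 : K - (g^3)⁻¹ = ((u*v-s)^2 - c^2*(u*v))/(c^2*(u*v)*g^3) := by
        rw [hKform]
        field_simp
      rw [e1, abs_div, abs_of_pos hden0, div_le_iff₀ hden0]
      have e2 : 5*ε*(g^3)⁻¹*(c^2*(u*v)*g^3) = 5*(ε*(c^2*(u*v))) := by
        field_simp
      rw [e2]
      apply abs_le.mpr
      constructor
      · linarith [hAlb, hεuv0]
      · linarith [hAub]
    have hg3inv : (g^3)⁻¹ ≤ 8*(r^3)⁻¹ := by
      rw [show (8:ℝ)*(r^3)⁻¹ = 8/r^3 from by ring, inv_eq_one_div, div_le_div_iff₀ hg30 hr30]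
      linarith [pow_le_pow_left₀ hr0.le hgrl 3]
    have hr3cube : r^3 ≤ 8*g^3 := by linarith [pow_le_pow_left₀ hr0.le hgrl 3]
    have hKr3 : |K - (r^3)⁻¹| ≤ 96*(ε*(r^3)⁻¹) := by
      have e1 : (g^3)⁻¹ - (r^3)⁻¹ = (r^3-g^3)/(g^3*r^3) := by
        field_simp
      have e2 : |(g^3)⁻¹ - (r^3)⁻¹| ≤ 56*(ε*(r^3)⁻¹) := by
        rw [e1, abs_div, abs_of_pos (mul_pos hg30 hr30), div_le_iff₀ (mul_pos hg30 hr30)]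
        have e3 : 56*(ε*(r^3)⁻¹)*(g^3*r^3) = 56*(ε*g^3) := by
          field_simp
        rw [e3]
        calc |r^3 - g^3| ≤ 7*(r^3*ε) := hcube
          _ ≤ 56*(ε*g^3) := by linarith [mul_le_mul_of_nonneg_left hr3cube hε0]
      calc |K - (r^3)⁻¹| = |(K - (g^3)⁻¹) + ((g^3)⁻¹ - (r^3)⁻¹)| := by
            rw [sub_add_sub_cancel]
        _ ≤ |K - (g^3)⁻¹| + |(g^3)⁻¹ - (r^3)⁻¹| := abs_add_le _ _
        _ ≤ 5*ε*(g^3)⁻¹ + 56*(ε*(r^3)⁻¹) := add_le_add hKg3 e2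
        _ ≤ 96*(ε*(r^3)⁻¹) := by
            have e4 : 5*ε*(g^3)⁻¹ ≤ 5*ε*(8*(r^3)⁻¹) :=
              mul_le_mul_of_nonneg_left hg3inv (by positivity)
            linarith [e4]
    have hK28 : K ≤ 28*(r^3)⁻¹ := by
      have e1 : K - (g^3)⁻¹ ≤ 5*ε*(g^3)⁻¹ := (abs_le.mp hKg3).2
      have e2 : 5*ε*(g^3)⁻¹ ≤ (5/2)*(g^3)⁻¹ :=
        mul_le_mul_of_nonneg_right (by linarith [hεh]) (inv_pos.mpr hg30).le
      have e3 : (7/2)*(g^3)⁻¹ ≤ (7/2)*(8*(r^3)⁻¹) :=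
        mul_le_mul_of_nonneg_left hg3inv (by norm_num)
      linarith [e1, e2, e3]
    have hSdiff : |SD - SI| ≤ 2*(r^2*ε) := by
      have e0 : SD - SI = (g^2-r^2)*d + D/c^2*(pi*qj+qi*pj) := by rw [hSD, hSI]; ring
      rw [e0]
      have e1 : |(g^2-r^2)*d| ≤ r^2*ε := by
        rw [abs_mul]
        calc |g^2 - r^2| * |d| ≤ (r^2*ε)*1 :=
              mul_le_mul (by rw [abs_sub_comm]; exact habs_r2g2) habsd (abs_nonneg _)
                (mul_nonneg (sq_nonneg r) hε0)
          _ = r^2*ε := mul_one _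
      have e2 : |D/c^2*(pi*qj+qi*pj)| ≤ r^2*ε := by
        rw [abs_mul, abs_of_nonneg hDc20]
        have e3 : D/c^2*|pi*qj+qi*pj| ≤ D/c^2*(2*W) :=
          mul_le_mul_of_nonneg_left habs_cross hDc20
        have e4 : D/c^2*(2*W) ≤ r^2*ε := by
          rw [div_mul_eq_mul_div, div_le_iff₀ hc20]
          have e5 : (2*D)*W ≤ r^2*W := mul_le_mul_of_nonneg_right h2Dr hW0.le
          have e6 : r^2*W*1 ≤ r^2*W*W :=
            mul_le_mul_of_nonneg_left hW1 (mul_nonneg (sq_nonneg r) hW0.le)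
          linarith [e5, e6, hεc_r]
        linarith [e3, e4]
      exact (abs_add_le _ _).trans (by linarith [e1, e2])
    rw [show K*SD - (r^3)⁻¹*SI = K*(SD - SI) + (K - (r^3)⁻¹)*SI from by ring, hRHS]
    have h1 : |K*(SD-SI)| ≤ (28*(r^3)⁻¹)*(2*(r^2*ε)) := by
      rw [abs_mul, abs_of_pos hK0]
      exact mul_le_mul hK28 hSdiff (abs_nonneg _)
        (mul_nonneg (by norm_num) (inv_pos.mpr hr30).le)
    have h2 : |(K - (r^3)⁻¹)*SI| ≤ (96*(ε*(r^3)⁻¹))*(2*r^2) := by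
      rw [abs_mul]
      exact mul_le_mul hKr3 hSIabs (abs_nonneg _)
        (mul_nonneg (by norm_num) (mul_nonneg hε0 (inv_pos.mpr hr30).le))
    have h3 : (28*(r^3)⁻¹)*(2*(r^2*ε)) + (96*(ε*(r^3)⁻¹))*(2*r^2) = 248*(ε*r⁻¹) := by
      field_simp
      ring
    have h4 : 248*(ε*r⁻¹) ≤ (300*W^5)/(c^2*r) := by
      have e1 : 248*(ε*r⁻¹) = (248*(ε*c^2))/(c^2*r) := by
        field_simp
      rw [e1, hεc]
      have e2 : 248*W^2 ≤ 300*W^5 := by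
        have := pow_le_pow_right₀ hW1 (show 2 ≤ 5 by norm_num)
        linarith [this, pow_nonneg hW0.le 5]
      exact (div_le_div_iff_of_pos_right (mul_pos hc20 hr0)).mpr e2
    calc |K*(SD-SI) + (K-(r^3)⁻¹)*SI| ≤ |K*(SD-SI)| + |(K-(r^3)⁻¹)*SI| := abs_add_le _ _
      _ ≤ 248*(ε*r⁻¹) := by linarith [h1, h2, h3.le, h3.ge]
      _ ≤ (300*W^5)/(c^2*r) := h4

/-- There is `C > 0` such that for every `c ≥ 1`, all `p ≠ q` and all indices `i, j`:
`|Φ^{c,ij}(p,q) − Φ^{∞,ij}(p,q)| ≤ (C/c²)·⟨p⟩⁵·⟨q⟩⁵·|p−q|⁻¹`. -/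
theorem stmt12 :
    ∃ C : ℝ, 0 < C ∧ ∀ (c : ℝ), 1 ≤ c → ∀ p q : E3, p ≠ q → ∀ i j : Fin 3,
      |Phi c p q i j - PhiInf p q i j| ≤ C / c ^ 2 * jb p ^ 5 * jb q ^ 5 * ‖p - q‖⁻¹ := by
  refine ⟨300, by norm_num, ?_⟩
  intro c hc p q hpq i j
  have hc0 : (0:ℝ) < c := by linarith
  have hc20 : (0:ℝ) < c^2 := by positivity
  have hu0 : 0 < pZ c p := Real.sqrt_pos.mpr (by linarith [sq_nonneg ‖p‖, hc20])
  have hv0 : 0 < pZ c q := Real.sqrt_pos.mpr (by linarith [sq_nonneg ‖q‖, hc20])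
  have hu2 : (pZ c p)^2 = c^2 + ‖p‖^2 := Real.sq_sqrt (by linarith [sq_nonneg ‖p‖, hc20])
  have hv2 : (pZ c q)^2 = c^2 + ‖q‖^2 := Real.sq_sqrt (by linarith [sq_nonneg ‖q‖, hc20])
  have hP0 : 0 < jb p := Real.sqrt_pos.mpr (by positivity)
  have hQ0 : 0 < jb q := Real.sqrt_pos.mpr (by positivity)
  have hP2 : (jb p)^2 = 1 + ‖p‖^2 := Real.sq_sqrt (by positivity)
  have hQ2 : (jb q)^2 = 1 + ‖q‖^2 := Real.sq_sqrt (by positivity)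
  have hs : |dotp p q| ≤ ‖p‖*‖q‖ := by
    unfold dotp
    exact abs_real_inner_le_norm p q
  have hr2 : ‖p-q‖^2 = ‖p‖^2 + ‖q‖^2 - 2*(dotp p q) := by
    unfold dotp
    rw [norm_sub_sq_real]
    ring
  have hr0 : 0 < ‖p-q‖ := by
    rw [norm_pos_iff]
    exact sub_ne_zero_of_ne hpq
  have hnn : |‖p‖-‖q‖| ≤ ‖p-q‖ := abs_norm_sub_norm_le p q
  have hwi : |p i - q i| ≤ ‖p-q‖ := by simpa using coord_abs_le (p-q) i
  have hwj : |p j - q j| ≤ ‖p-q‖ := by simpa using coord_abs_le (p-q) j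
  have htau : c^2 ≤ pZ c p * pZ c q - dotp p q :=
    tau_lb c (pZ c p) (pZ c q) ‖p‖ ‖q‖ (dotp p q) hc (norm_nonneg p) (norm_nonneg q)
      hu2 hv2 hu0 hv0 hs
  have hρ0 : 0 ≤ ((pZ c p * pZ c q - dotp p q)^2 - c^4)/c^2 := by
    apply div_nonneg _ hc20.le
    linarith [pow_le_pow_left₀ hc20.le htau 2, sq_nonneg c]
  set g := Real.sqrt (((pZ c p * pZ c q - dotp p q)^2 - c^4)/c^2) with hgdef
  have hg2 : g^2 = ((pZ c p * pZ c q - dotp p q)^2 - c^4)/c^2 := Real.sq_sqrt hρ0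
  have hkey := aux_core c (pZ c p) (pZ c q) (jb p) (jb q) ‖p‖ ‖q‖ (dotp p q) ‖p-q‖ g
    (p i) (p j) (q i) (q j) (if i = j then 1 else 0)
    hc (norm_nonneg p) (norm_nonneg q) hu2 hv2 hu0 hv0 hP2 hQ2 hP0 hQ0 hs hr2 hr0 hnn
    (coord_abs_le p i) (coord_abs_le p j) (coord_abs_le q i) (coord_abs_le q j)
    hwi hwj hg2 (Real.sqrt_nonneg _)
    (by by_cases h : i = j <;> simp [h])
  have hphi : Phi c p q i j
      = c/(pZ c p)*(c/(pZ c q))*((pZ c p * pZ c q - dotp p q)^2/c^4 * (g^3)⁻¹) *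
        (((pZ c p * pZ c q - dotp p q)^2-c^4)/c^2 * (if i = j then 1 else 0)
          - (p i - q i)*(p j - q j)
          + (pZ c p * pZ c q - dotp p q - c^2)/c^2*(p i * q j + q i * p j)) := by
    simp only [Phi, Lam, Smat]
    rw [rpow_neg32 _ hρ0, ← hgdef]
  have hphiInf : PhiInf p q i j
      = (‖p-q‖^3)⁻¹ * (‖p-q‖^2*(if i = j then 1 else 0) - (p i - q i)*(p j - q j)) := rfl
  rw [hphi, hphiInf]
  exact hkey.trans (le_of_eq (by ring))

end
end
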